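/- arXiv:1906.09291 — 8 statements merged into one kernel-verified Lean document; each statement's English description precedes it below -/
import Mathlib

section
/- Let q ≡ 3 (mod 4) be an odd prime power and let β ∈ NQR(q) with β ≠ −1 be such that (β²+1)/(β−1) ∈ QR(q). Then the one-factorization {F^β_γ : γ ∈ F} of the complete graph on F ∪ {∞} generated by the starter S_β is C4-free: for all γ, δ ∈ F, the graph on F ∪ {∞} with edge set F^β_γ ∪ F^β_δ contains no cycle of length 4. -/
/-- The set of nonzero squares (quadratic residues) of a field. -/
def QR (F : Type*) [Field F] : Set F := {x | x ≠ 0 ∧ ∃ y, y ^ 2 = x}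

/-- The set of nonzero non-squares of a field. -/
def NQR (F : Type*) [Field F] : Set F := {x | x ≠ 0 ∧ ¬ ∃ y, y ^ 2 = x}

/-- A graph has a cycle of length 4. -/
def HasC4 {V : Type*} (G : SimpleGraph V) : Prop :=
  ∃ (v : V) (c : G.Walk v v), c.IsCycle ∧ c.length = 4

/-- The one-factor `F^β_γ = {{∞, γ}} ∪ {{x+γ, xβ+γ} : x ∈ QR(q)}` on `F ∪ {∞}`
(with `∞ = none`), of the one-factorization generated by the starter `S_β`. -/
def starterFactor {F : Type*} [Field F] (β γ : F) : Set (Sym2 (Option F)) :=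
  {s(none, some γ)} ∪ {e | ∃ x ∈ QR F, e = s(some (x + γ), some (x * β + γ))}

/-- The one-factor `G^β_γ = {{∞, γ}} ∪ {{-x+γ, -xβ+γ} : x ∈ QR(q)}`, of the
one-factorization generated by the starter `-S_β`. -/
def negStarterFactor {F : Type*} [Field F] (β γ : F) : Set (Sym2 (Option F)) :=
  {s(none, some γ)} ∪ {e | ∃ x ∈ QR F, e = s(some (-x + γ), some (-(x * β) + γ))}

section AuxC4Free

lemma QR_iff {F : Type*} [Field F] {x : F} : x ∈ QR F ↔ x ≠ 0 ∧ IsSquare x := by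
  unfold QR
  simp only [Set.mem_setOf_eq, IsSquare, and_congr_right_iff]
  intro _
  constructor
  · rintro ⟨y, rfl⟩; exact ⟨y, sq y⟩
  · rintro ⟨y, rfl⟩; exact ⟨y, sq y⟩

lemma NQR_iff {F : Type*} [Field F] {x : F} : x ∈ NQR F ↔ x ≠ 0 ∧ ¬ IsSquare x := by
  unfold NQR
  simp only [Set.mem_setOf_eq, IsSquare, and_congr_right_iff, not_iff_not]
  intro _
  constructor
  · rintro ⟨y, rfl⟩; exact ⟨y, sq y⟩
  · rintro ⟨y, rfl⟩; exact ⟨y, sq y⟩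

-- key contradiction lemmas
lemma keyA {F : Type*} [Field F] (hn1 : ¬ IsSquare (-1 : F)) {t u v : F}
    (ht : IsSquare t) (hu : IsSquare u) (hv : IsSquare v)
    (hv0 : v ≠ 0) (ht0 : t ≠ 0) (h : u = -(v * t)) : False := by
  apply hn1
  have : (-1 : F) = u * v⁻¹ * t⁻¹ := by field_simp [h]; linear_combination -h
  rw [this]
  exact ((hu.mul (isSquare_inv.mpr hv)).mul (isSquare_inv.mpr ht))

lemma keyB {F : Type*} [Field F] {β : F} (hβ : ¬ IsSquare β) {t u v : F}
    (ht : IsSquare t) (hu : IsSquare u) (hv : IsSquare v)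
    (hu0 : u ≠ 0) (h : u * β = v * t) : False := by
  apply hβ
  have : β = v * t * u⁻¹ := by field_simp [mul_comm β u, h]; linear_combination h
  rw [this]
  exact (hv.mul ht).mul (isSquare_inv.mpr hu)

-- membership lemmas
lemma mem_ss {F : Type*} [Field F] {β γ : F} {u v : F}
    (h : s(some u, some v) ∈ starterFactor β γ) :
    ∃ x, x ∈ QR F ∧ ((u = x + γ ∧ v = x * β + γ) ∨ (u = x * β + γ ∧ v = x + γ)) := by
  rcases h with h | h
  · simp only [Set.mem_singleton_iff, Sym2.eq_iff] at h
    rcases h with ⟨h, -⟩ | ⟨-, h⟩ <;> exact absurd h (by simp)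
  · obtain ⟨x, hx, he⟩ := h
    rw [Sym2.eq_iff] at he
    refine ⟨x, hx, ?_⟩
    rcases he with ⟨h1, h2⟩ | ⟨h1, h2⟩
    · exact Or.inl ⟨Option.some_injective _ h1, Option.some_injective _ h2⟩
    · exact Or.inr ⟨Option.some_injective _ h1, Option.some_injective _ h2⟩

lemma mem_ns {F : Type*} [Field F] {β γ : F} {v : F}
    (h : s((none : Option F), some v) ∈ starterFactor β γ) : v = γ := by
  rcases h with h | h
  · simp only [Set.mem_singleton_iff, Sym2.eq_iff] at h
    rcases h with ⟨-, h⟩ | ⟨h, -⟩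
    · exact Option.some_injective _ h
    · exact absurd h (by simp)
  · obtain ⟨x, hx, he⟩ := h
    rw [Sym2.eq_iff] at he
    rcases he with ⟨h1, -⟩ | ⟨h1, -⟩ <;> exact absurd h1 (by simp)

lemma mem_nn {F : Type*} [Field F] {β γ : F}
    (h : s((none : Option F), (none : Option F)) ∈ starterFactor β γ) : False := by
  rcases h with h | h
  · simp [Sym2.eq_iff] at h
  · obtain ⟨x, hx, he⟩ := h
    simp [Sym2.eq_iff] at he

lemma sqne {F : Type*} [Field F] {β x y : F} (hβns : ¬ IsSquare β)
    (hx : x ∈ QR F) (hy : y ∈ QR F) : x ≠ y * β := by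
  intro h
  apply hβns
  have hy0 := (QR_iff.mp hy).1
  have hb : β = x * y⁻¹ := by
    rw [h, mul_comm y β, mul_assoc, mul_inv_cancel₀ hy0, mul_one]
  rw [hb]
  exact (QR_iff.mp hx).2.mul (isSquare_inv.mpr (QR_iff.mp hy).2)

lemma matching' {F : Type*} [Field F] {β : F} (hβ0 : β ≠ 0) (hβns : ¬ IsSquare β)
    {γ : F} {u v w : Option F} (h1 : s(u, v) ∈ starterFactor β γ)
    (h2 : s(u, w) ∈ starterFactor β γ) (hvw : v ≠ w) : False := by
  match u, v, w with
  | none, none, _ => exact mem_nn h1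
  | none, _, none => exact mem_nn h2
  | none, some v', some w' =>
    exact hvw (by rw [mem_ns h1, mem_ns h2])
  | some u', none, none => exact hvw rfl
  | some u', none, some w' =>
    rw [Sym2.eq_swap] at h1
    have hu : u' = γ := mem_ns h1
    subst hu
    obtain ⟨x, hx, ⟨h3, -⟩ | ⟨h3, -⟩⟩ := mem_ss h2
    · exact (QR_iff.mp hx).1 (by linear_combination -h3)
    · exact mul_ne_zero (QR_iff.mp hx).1 hβ0 (by linear_combination -h3)
  | some u', some v', none =>
    rw [Sym2.eq_swap] at h2
    have hu : u' = γ := mem_ns h2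
    subst hu
    obtain ⟨x, hx, ⟨h3, -⟩ | ⟨h3, -⟩⟩ := mem_ss h1
    · exact (QR_iff.mp hx).1 (by linear_combination -h3)
    · exact mul_ne_zero (QR_iff.mp hx).1 hβ0 (by linear_combination -h3)
  | some u', some v', some w' =>
    obtain ⟨x, hx, ⟨hx1, hx2⟩ | ⟨hx1, hx2⟩⟩ := mem_ss h1 <;>
      obtain ⟨y, hy, ⟨hy1, hy2⟩ | ⟨hy1, hy2⟩⟩ := mem_ss h2
    · have : x = y := by linear_combination hy1 - hx1
      subst this; exact hvw (by rw [hx2, hy2])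
    · exact sqne hβns hx hy (by linear_combination hy1 - hx1)
    · exact sqne hβns hy hx (by linear_combination hx1 - hy1)
    · have : x = y := by
        have h : x * β = y * β := by linear_combination hy1 - hx1
        exact mul_right_cancel₀ hβ0 h
      subst this; exact hvw (by rw [hx2, hy2])

lemma sq_beta_contra {F : Type*} [Field F] {β t : F} (hβns : ¬ IsSquare β)
    (ht : IsSquare t) (ht' : β ^ 2 + 1 = t * (β - 1)) (k : β ^ 2 - β + 1 = 0) : False := by
  apply hβns
  have hsq : β = t * β ^ 2 := by linear_combination (-(1+t)) * k + ht'
  rw [hsq]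
  exact ht.mul ⟨β, sq β⟩

lemma bridge {F : Type*} [Field F] {β t : F} (hn1 : ¬ IsSquare (-1 : F)) (hβ0 : β ≠ 0)
    (hβns : ¬ IsSquare β) (ht : IsSquare t) (ht' : β ^ 2 + 1 = t * (β - 1))
    {g d v : F}
    (h1 : ∃ y, y ∈ QR F ∧ ((g = y + d ∧ v = y * β + d) ∨ (g = y * β + d ∧ v = y + d)))
    (h2 : ∃ x, x ∈ QR F ∧ ((v = x + g ∧ d = x * β + g) ∨ (v = x * β + g ∧ d = x + g))) :
    False := by
  obtain ⟨y, hy, hy'⟩ := h1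
  obtain ⟨x, hx, hx'⟩ := h2
  have hy0 := (QR_iff.mp hy).1
  have hysq := (QR_iff.mp hy).2
  have hxsq := (QR_iff.mp hx).2
  rcases hy' with ⟨ha, hb⟩ | ⟨ha, hb⟩ <;> rcases hx' with ⟨hc, hd⟩ | ⟨hc, hd⟩
  · -- g = y + d, v = yβ + d, v = x + g, d = xβ + g
    have key : y * (β ^ 2 - β + 1) = 0 := by
      linear_combination (β - 1) * ha - β * hb + β * hc - hd
    rcases mul_eq_zero.mp key with h | h
    · exact hy0 h
    · exact sq_beta_contra hβns ht ht' h
  · -- g = y + d, v = yβ + d, v = xβ + g, d = x + g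
    exact keyA hn1 IsSquare.one hxsq hysq hy0 one_ne_zero (by linear_combination -ha - hd)
  · -- g = yβ + d, v = y + d, v = x + g, d = xβ + g
    have key : (x + y) * β = 0 := by linear_combination -ha - hd
    rcases mul_eq_zero.mp key with h | h
    · exact keyA hn1 IsSquare.one hxsq hysq hy0 one_ne_zero (by linear_combination h)
    · exact hβ0 h
  · -- g = yβ + d, v = y + d, v = xβ + g, d = x + g
    have key : y * (β ^ 2 - β + 1) = 0 := by
      linear_combination (1 - β) * ha - hb + hc - β * hd
    rcases mul_eq_zero.mp key with h | h
    · exact hy0 h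
    · exact sq_beta_contra hβns ht ht' h

lemma quad {F : Type*} [Field F] {β t γ δ : F} (hn1 : ¬ IsSquare (-1 : F))
    (h2ne : (2 : F) ≠ 0) (hβ0 : β ≠ 0) (hβns : ¬ IsSquare β)
    (hβm1 : β - 1 ≠ 0) (hb2ne : β ^ 2 + 1 ≠ 0)
    (ht : IsSquare t) (ht0 : t ≠ 0) (ht' : β ^ 2 + 1 = t * (β - 1))
    {a b c d : Option F} (hac : a ≠ c) (hbd : b ≠ d)
    (hab : s(a, b) ∈ starterFactor β γ) (hbc : s(b, c) ∈ starterFactor β δ)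
    (hcd : s(c, d) ∈ starterFactor β γ) (hda : s(d, a) ∈ starterFactor β δ) : False := by
  by_cases hγδ : γ = δ
  · subst hγδ
    have hab' : s(b, a) ∈ starterFactor β γ := by rwa [Sym2.eq_swap]
    exact matching' hβ0 hβns hab' hbc hac
  have hδγ : δ - γ ≠ 0 := sub_ne_zero.mpr (Ne.symm hγδ)
  match a, b, c, d, hac, hbd, hab, hbc, hcd, hda with
  | none, none, _, _, hac, hbd, hab, hbc, hcd, hda => exact mem_nn hab
  | _, none, none, _, hac, hbd, hab, hbc, hcd, hda => exact mem_nn hbc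
  | _, _, none, none, hac, hbd, hab, hbc, hcd, hda => exact mem_nn hcd
  | none, _, _, none, hac, hbd, hab, hbc, hcd, hda => exact mem_nn (by rwa [Sym2.eq_swap] at hda)
  | none, some b', none, _, hac, hbd, hab, hbc, hcd, hda => exact hac rfl
  | some a', none, some c', none, hac, hbd, hab, hbc, hcd, hda => exact hbd rfl
  | none, some b', some c', some d', hac, hbd, hab, hbc, hcd, hda =>
    have hb' : b' = γ := mem_ns hab
    have hd' : d' = δ := mem_ns (by rwa [Sym2.eq_swap] at hda)
    subst hb' hd'
    exact bridge hn1 hβ0 hβns ht ht' (mem_ss hbc) (mem_ss hcd)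
  | some a', none, some c', some d', hac, hbd, hab, hbc, hcd, hda =>
    have ha' : a' = γ := mem_ns (by rwa [Sym2.eq_swap] at hab)
    have hc' : c' = δ := mem_ns hbc
    subst ha' hc'
    exact bridge hn1 hβ0 hβns ht ht' (mem_ss hcd) (mem_ss hda)
  | some a', some b', none, some d', hac, hbd, hab, hbc, hcd, hda =>
    have hb' : b' = δ := mem_ns (by rwa [Sym2.eq_swap] at hbc)
    have hd' : d' = γ := mem_ns hcd
    subst hb' hd'
    exact bridge hn1 hβ0 hβns ht ht' (mem_ss hda) (mem_ss hab)
  | some a', some b', some c', none, hac, hbd, hab, hbc, hcd, hda =>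
    have hc' : c' = γ := mem_ns (by rwa [Sym2.eq_swap] at hcd)
    have ha' : a' = δ := mem_ns hda
    subst hc' ha'
    exact bridge hn1 hβ0 hβns ht ht' (mem_ss hab) (mem_ss hbc)
  | some a', some b', some c', some d', hac, hbd, hab, hbc, hcd, hda =>
    obtain ⟨x, hx, hxo⟩ := mem_ss hab
    obtain ⟨y, hy, hyo⟩ := mem_ss hbc
    obtain ⟨z, hz, hzo⟩ := mem_ss hcd
    obtain ⟨w, hw, hwo⟩ := mem_ss hda
    have hx0 := (QR_iff.mp hx).1; have hxsq := (QR_iff.mp hx).2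
    have hy0 := (QR_iff.mp hy).1; have hysq := (QR_iff.mp hy).2
    have hz0 := (QR_iff.mp hz).1; have hzsq := (QR_iff.mp hz).2
    have hw0 := (QR_iff.mp hw).1; have hwsq := (QR_iff.mp hw).2
    rcases hxo with ⟨ha1, hb1⟩ | ⟨ha1, hb1⟩ <;>
      rcases hyo with ⟨hb2, hc2⟩ | ⟨hb2, hc2⟩ <;>
      rcases hzo with ⟨hc3, hd3⟩ | ⟨hc3, hd3⟩ <;>
      rcases hwo with ⟨hd4, ha4⟩ | ⟨hd4, ha4⟩
    · -- case (0, 0, 0, 0)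
      have hP : (x + y) * ((β - 1) * (β ^ 2 + 1)) = 0 := by
        linear_combination (β^2 - β + 1) * hb2 - (β^2 - β + 1) * hb1 + (β^2) * hc3 - (β^2) * hc2 + (β) * hd4 - (β) * hd3 + (1) * ha1 - (1) * ha4
      have hR : x + y = 0 := (mul_eq_zero.mp hP).resolve_right (mul_ne_zero hβm1 hb2ne)
      exact keyA hn1 IsSquare.one hysq hxsq hx0 one_ne_zero (by linear_combination hR)
    · -- case (0, 0, 0, 1)
      have hP : (w * (β - 1) + x * (β ^ 2 + 1)) * (β - 1) = 0 := by
        linear_combination (β^2) * hb2 - (β^2) * hb1 + (β) * hc3 - (β) * hc2 + (1) * hd4 - (1) * hd3 + (β^2 - β + 1) * ha1 - (β^2 - β + 1) * ha4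
      have hR : w * (β - 1) + x * (β ^ 2 + 1) = 0 := (mul_eq_zero.mp hP).resolve_right hβm1
      have h5 : w * (β - 1) = (-(x * t)) * (β - 1) := by linear_combination hR - x * ht'
      exact keyA hn1 ht hwsq hxsq hx0 ht0 (mul_right_cancel₀ hβm1 h5)
    · -- case (0, 0, 1, 0)
      have hP : (z * β * (β - 1) - y * (β ^ 2 + 1)) * (β - 1) = 0 := by
        linear_combination (-1) * hb2 - (-1) * hb1 + (-(β^2 - β + 1)) * hc3 - (-(β^2 - β + 1)) * hc2 + (-(β^2)) * hd4 - (-(β^2)) * hd3 + (-β) * ha1 - (-β) * ha4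
      have hR : z * β * (β - 1) - y * (β ^ 2 + 1) = 0 := (mul_eq_zero.mp hP).resolve_right hβm1
      have h5 : (z * β) * (β - 1) = (y * t) * (β - 1) := by linear_combination hR + y * ht'
      exact keyB hβns ht hzsq hysq hz0 (mul_right_cancel₀ hβm1 h5)
    · -- case (0, 0, 1, 1)
      have hP : (δ - γ) * ((β - 1) * (β - 1)) = 0 := by
        linear_combination (β) * hb2 - (β) * hb1 + (1) * hc3 - (1) * hc2 + (β) * hd4 - (β) * hd3 + (β^2) * ha1 - (β^2) * ha4
      exact hδγ ((mul_eq_zero.mp hP).resolve_right (mul_ne_zero hβm1 hβm1))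
    · -- case (0, 1, 0, 0)
      have hP : (y * β * (β - 1) - x * (β ^ 2 + 1)) * (β - 1) = 0 := by
        linear_combination (-(β^2 - β + 1)) * hb2 - (-(β^2 - β + 1)) * hb1 + (-(β^2)) * hc3 - (-(β^2)) * hc2 + (-β) * hd4 - (-β) * hd3 + (-1) * ha1 - (-1) * ha4
      have hR : y * β * (β - 1) - x * (β ^ 2 + 1) = 0 := (mul_eq_zero.mp hP).resolve_right hβm1
      have h5 : (y * β) * (β - 1) = (x * t) * (β - 1) := by linear_combination hR + x * ht'
      exact keyB hβns ht hysq hxsq hy0 (mul_right_cancel₀ hβm1 h5)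
    · -- case (0, 1, 0, 1)
      have hP : (δ - γ) * (2 * (β - 1)) = 0 := by
        linear_combination (1) * hb2 - (1) * hb1 + (β) * hc3 - (β) * hc2 + (1) * hd4 - (1) * hd3 + (β) * ha1 - (β) * ha4
      exact hδγ ((mul_eq_zero.mp hP).resolve_right (mul_ne_zero h2ne hβm1))
    · -- case (0, 1, 1, 0)
      have hP : (δ - γ) * ((β - 1) * (β - 1)) = 0 := by
        linear_combination (-1) * hb2 - (-1) * hb1 + (-β) * hc3 - (-β) * hc2 + (-(β^2)) * hd4 - (-(β^2)) * hd3 + (-β) * ha1 - (-β) * ha4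
      exact hδγ ((mul_eq_zero.mp hP).resolve_right (mul_ne_zero hβm1 hβm1))
    · -- case (0, 1, 1, 1)
      have hP : (x * β * (β - 1) - y * (β ^ 2 + 1)) * (β - 1) = 0 := by
        linear_combination (β^2 - β + 1) * hb2 - (β^2 - β + 1) * hb1 + (1) * hc3 - (1) * hc2 + (β) * hd4 - (β) * hd3 + (β^2) * ha1 - (β^2) * ha4
      have hR : x * β * (β - 1) - y * (β ^ 2 + 1) = 0 := (mul_eq_zero.mp hP).resolve_right hβm1
      have h5 : (x * β) * (β - 1) = (y * t) * (β - 1) := by linear_combination hR + y * ht'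
      exact keyB hβns ht hxsq hysq hx0 (mul_right_cancel₀ hβm1 h5)
    · -- case (1, 0, 0, 0)
      have hP : (x * β * (β - 1) - w * (β ^ 2 + 1)) * (β - 1) = 0 := by
        linear_combination (-(β^2)) * hb2 - (-(β^2)) * hb1 + (-β) * hc3 - (-β) * hc2 + (-1) * hd4 - (-1) * hd3 + (-(β^2 - β + 1)) * ha1 - (-(β^2 - β + 1)) * ha4
      have hR : x * β * (β - 1) - w * (β ^ 2 + 1) = 0 := (mul_eq_zero.mp hP).resolve_right hβm1
      have h5 : (x * β) * (β - 1) = (w * t) * (β - 1) := by linear_combination hR + w * ht'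
      exact keyB hβns ht hxsq hwsq hx0 (mul_right_cancel₀ hβm1 h5)
    · -- case (1, 0, 0, 1)
      have hP : (δ - γ) * ((β - 1) * (β - 1)) = 0 := by
        linear_combination (-(β^2)) * hb2 - (-(β^2)) * hb1 + (-β) * hc3 - (-β) * hc2 + (-1) * hd4 - (-1) * hd3 + (-β) * ha1 - (-β) * ha4
      exact hδγ ((mul_eq_zero.mp hP).resolve_right (mul_ne_zero hβm1 hβm1))
    · -- case (1, 0, 1, 0)
      have hP : (δ - γ) * (2 * (β - 1)) = 0 := by
        linear_combination (-β) * hb2 - (-β) * hb1 + (-1) * hc3 - (-1) * hc2 + (-β) * hd4 - (-β) * hd3 + (-1) * ha1 - (-1) * ha4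
      exact hδγ ((mul_eq_zero.mp hP).resolve_right (mul_ne_zero h2ne hβm1))
    · -- case (1, 0, 1, 1)
      have hP : (y * (β - 1) + x * (β ^ 2 + 1)) * (β - 1) = 0 := by
        linear_combination (-(β^2 - β + 1)) * hb2 - (-(β^2 - β + 1)) * hb1 + (-1) * hc3 - (-1) * hc2 + (-β) * hd4 - (-β) * hd3 + (-(β^2)) * ha1 - (-(β^2)) * ha4
      have hR : y * (β - 1) + x * (β ^ 2 + 1) = 0 := (mul_eq_zero.mp hP).resolve_right hβm1
      have h5 : y * (β - 1) = (-(x * t)) * (β - 1) := by linear_combination hR - x * ht'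
      exact keyA hn1 ht hysq hxsq hx0 ht0 (mul_right_cancel₀ hβm1 h5)
    · -- case (1, 1, 0, 0)
      have hP : (δ - γ) * ((β - 1) * (β - 1)) = 0 := by
        linear_combination (β) * hb2 - (β) * hb1 + (β^2) * hc3 - (β^2) * hc2 + (β) * hd4 - (β) * hd3 + (1) * ha1 - (1) * ha4
      exact hδγ ((mul_eq_zero.mp hP).resolve_right (mul_ne_zero hβm1 hβm1))
    · -- case (1, 1, 0, 1)
      have hP : (z * β * (β - 1) - w * (β ^ 2 + 1)) * (β - 1) = 0 := by
        linear_combination (β) * hb2 - (β) * hb1 + (β^2) * hc3 - (β^2) * hc2 + (β^2 - β + 1) * hd4 - (β^2 - β + 1) * hd3 + (1) * ha1 - (1) * ha4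
      have hR : z * β * (β - 1) - w * (β ^ 2 + 1) = 0 := (mul_eq_zero.mp hP).resolve_right hβm1
      have h5 : (z * β) * (β - 1) = (w * t) * (β - 1) := by linear_combination hR + w * ht'
      exact keyB hβns ht hzsq hwsq hz0 (mul_right_cancel₀ hβm1 h5)
    · -- case (1, 1, 1, 0)
      have hP : (w * (β - 1) + z * (β ^ 2 + 1)) * (β - 1) = 0 := by
        linear_combination (-β) * hb2 - (-β) * hb1 + (-(β^2)) * hc3 - (-(β^2)) * hc2 + (-(β^2 - β + 1)) * hd4 - (-(β^2 - β + 1)) * hd3 + (-1) * ha1 - (-1) * ha4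
      have hR : w * (β - 1) + z * (β ^ 2 + 1) = 0 := (mul_eq_zero.mp hP).resolve_right hβm1
      have h5 : w * (β - 1) = (-(z * t)) * (β - 1) := by linear_combination hR - z * ht'
      exact keyA hn1 ht hwsq hzsq hz0 ht0 (mul_right_cancel₀ hβm1 h5)
    · -- case (1, 1, 1, 1)
      have hP : (x + y) * ((β - 1) * (β ^ 2 + 1)) = 0 := by
        linear_combination (-(β^2 - β + 1)) * hb2 - (-(β^2 - β + 1)) * hb1 + (-1) * hc3 - (-1) * hc2 + (-β) * hd4 - (-β) * hd3 + (-(β^2)) * ha1 - (-(β^2)) * ha4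
      have hR : x + y = 0 := (mul_eq_zero.mp hP).resolve_right (mul_ne_zero hβm1 hb2ne)
      exact keyA hn1 IsSquare.one hysq hxsq hx0 one_ne_zero (by linear_combination hR)


lemma c4_extract {V : Type*} (E : Set (Sym2 V)) (h : HasC4 (SimpleGraph.fromEdgeSet E)) :
    ∃ a b c d : V, a ≠ b ∧ a ≠ c ∧ a ≠ d ∧ b ≠ c ∧ b ≠ d ∧ c ≠ d ∧
      s(a,b) ∈ E ∧ s(b,c) ∈ E ∧ s(c,d) ∈ E ∧ s(d,a) ∈ E := by
  obtain ⟨v, c, hc, hl⟩ := h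
  cases c with
  | nil => simp at hl
  | cons h1 p =>
    cases p with
    | nil => simp at hl
    | cons h2 p =>
      cases p with
      | nil => simp at hl
      | cons h3 p =>
        cases p with
        | nil => simp at hl
        | cons h4 p =>
          cases p with
          | cons h5 p => simp [SimpleGraph.Walk.length_cons] at hl
          | nil =>
            rename_i x1 x2 x3
            have hnd := hc.support_nodup
            simp [SimpleGraph.Walk.support_cons, List.nodup_cons] at hnd
            rw [SimpleGraph.fromEdgeSet_adj] at h1 h2 h3 h4
            exact ⟨v, x1, x2, x3, h1.2, fun hh => hnd.2.1.2 hh.symm,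
              fun hh => hnd.2.2 hh.symm, h2.2, hnd.1.2.1, h3.2, h1.1, h2.1, h3.1, h4.1⟩


end AuxC4Free

/-- If `q ≡ 3 (mod 4)` is an odd prime power and `β ∈ NQR(q) \ {-1}` satisfies
`(β²+1)/(β-1) ∈ QR(q)`, then the one-factorization generated by the starter `S_β`
is C4-free. -/
theorem starter_one_factorization_C4_free (q : ℕ) (hq : q % 4 = 3)
    (F : Type*) [Field F] [Fintype F] (hcard : Fintype.card F = q)
    (β : F) (hβ : β ∈ NQR F) (hβ1 : β ≠ -1)
    (hfrac : (β ^ 2 + 1) / (β - 1) ∈ QR F) :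
    ∀ γ δ : F,
      ¬ HasC4 (SimpleGraph.fromEdgeSet (starterFactor β γ ∪ starterFactor β δ)) := by
  intro γ δ h
  have hn1 : ¬ IsSquare (-1 : F) := by
    rw [FiniteField.isSquare_neg_one_iff]
    simp [hcard, hq]
  obtain ⟨hβ0, hβns⟩ := NQR_iff.mp hβ
  have hβm1 : β - 1 ≠ 0 := by
    intro hh
    exact hβns (by rw [sub_eq_zero.mp hh]; exact IsSquare.one)
  obtain ⟨ht0, ht⟩ := QR_iff.mp hfrac
  have hb2ne : β ^ 2 + 1 ≠ 0 := by
    intro hh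
    exact ht0 (by rw [hh, zero_div])
  have ht' : β ^ 2 + 1 = (β ^ 2 + 1) / (β - 1) * (β - 1) := (div_mul_cancel₀ _ hβm1).symm
  have h2ne : (2 : F) ≠ 0 := by
    intro hh
    apply hn1
    have h1 : (-1 : F) = 1 := by linear_combination -hh
    rw [h1]; exact IsSquare.one
  obtain ⟨a, b, c, d, hab', hac, had, hbc', hbd, hcd', e1, e2, e3, e4⟩ := c4_extract _ h
  have swap1 : s(b, a) ∈ starterFactor β γ ∪ starterFactor β δ := by rwa [Sym2.eq_swap]
  rcases e1 with m1 | m1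
  · have m2 : s(b, c) ∈ starterFactor β δ := by
      rcases e2 with m2 | m2
      · exact (matching' hβ0 hβns
          (show s(b, a) ∈ starterFactor β γ by rwa [Sym2.eq_swap]) m2 hac).elim
      · exact m2
    have m3 : s(c, d) ∈ starterFactor β γ := by
      rcases e3 with m3 | m3
      · exact m3
      · exact (matching' hβ0 hβns
          (show s(c, b) ∈ starterFactor β δ by rwa [Sym2.eq_swap]) m3 hbd).elim
    have m4 : s(d, a) ∈ starterFactor β δ := by
      rcases e4 with m4 | m4
      · exact (matching' hβ0 hβns
          (show s(d, c) ∈ starterFactor β γ by rwa [Sym2.eq_swap]) m4 (Ne.symm hac)).elim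
      · exact m4
    exact quad hn1 h2ne hβ0 hβns hβm1 hb2ne ht ht0 ht' hac hbd m1 m2 m3 m4
  · have m2 : s(b, c) ∈ starterFactor β γ := by
      rcases e2 with m2 | m2
      · exact m2
      · exact (matching' hβ0 hβns
          (show s(b, a) ∈ starterFactor β δ by rwa [Sym2.eq_swap]) m2 hac).elim
    have m3 : s(c, d) ∈ starterFactor β δ := by
      rcases e3 with m3 | m3
      · exact (matching' hβ0 hβns
          (show s(c, b) ∈ starterFactor β γ by rwa [Sym2.eq_swap]) m3 hbd).elim
      · exact m3
    have m4 : s(d, a) ∈ starterFactor β γ := by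
      rcases e4 with m4 | m4
      · exact m4
      · exact (matching' hβ0 hβns
          (show s(d, c) ∈ starterFactor β δ by rwa [Sym2.eq_swap]) m4 (Ne.symm hac)).elim
    exact quad hn1 h2ne hβ0 hβns hβm1 hb2ne ht ht0 ht' hac hbd m1 m2 m3 m4
end

section
/- Let q ≡ 3 (mod 4) be an odd prime power and let β ∈ NQR(q) with β ∉ {−1, 2, 2⁻¹}. If (β²+1)/2 ∈ QR(q) or (β−1)/2 ∈ QR(q), then the pair of one-factorizations generated by the starters S_β and −S_β is C4-free: for all γ, δ ∈ F, the graph on F ∪ {∞} with edge set F^β_γ ∪ G^β_δ contains no cycle of length 4. -/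
set_option linter.unusedSectionVars false
set_option maxHeartbeats 1000000

/-- Common generalization of `starterFactor` (ε = 1) and `negStarterFactor` (ε = -1). -/
def genFactor {F : Type*} [Field F] (β ε θ : F) : Set (Sym2 (Option F)) :=
  {s(none, some θ)} ∪ {e | ∃ x ∈ QR F, e = s(some (ε * x + θ), some (ε * (x * β) + θ))}

section Aux
variable {F : Type*} [Field F] [Fintype F] [DecidableEq F]


lemma qc_one_of_mem {s : F} (hs : s ∈ QR F) : quadraticChar F s = 1 := by
  obtain ⟨h0, y, hy⟩ := hs
  exact (quadraticChar_one_iff_isSquare h0).mpr ⟨y, by rw [← hy]; ring⟩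

lemma qc_eq_of_mul {s t A B : F} (hs : s ∈ QR F) (ht : t ∈ QR F) (h : s * A = B * t) :
    quadraticChar F A = quadraticChar F B := by
  have h1 := qc_one_of_mem hs
  have h2 := qc_one_of_mem ht
  have h3 := congrArg (quadraticChar F) h
  rw [map_mul, map_mul, h1, h2, one_mul, mul_one] at h3
  exact h3

lemma beta_kill {β : F} (hχβ : quadraticChar F β = -1) {s t : F}
    (hs : s ∈ QR F) (ht : t ∈ QR F) (h : s = t * β) : False := by
  have h' : s * 1 = β * t := by linear_combination h
  have := qc_eq_of_mul hs ht h'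
  rw [map_one, hχβ] at this
  norm_num at this

lemma neg_kill (hχm1 : quadraticChar F (-1 : F) = -1) {s t : F}
    (hs : s ∈ QR F) (ht : t ∈ QR F) (h : s = -t) : False := by
  have h' : s * 1 = (-1) * t := by linear_combination h
  have := qc_eq_of_mul hs ht h'
  rw [map_one, hχm1] at this
  norm_num at this

lemma two_nz (hm1 : ¬ IsSquare (-1 : F)) : (2 : F) ≠ 0 := by
  intro h
  apply hm1
  have : (-1 : F) = 1 := by linear_combination -h
  rw [this]; exact IsSquare.one

lemma cancel_factor {m a b : F} (hm : m ≠ 0) (h : m * (a - b) = 0) : a = b := by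
  rcases mul_eq_zero.mp h with h' | h'
  · exact absurd h' hm
  · exact sub_eq_zero.mp h'

lemma double_kill {β : F} (hχβ : quadraticChar F β = -1) (h2 : (2:F) ≠ 0)
    (hA : quadraticChar F (β ^ 2 + 1) = quadraticChar F (2 * β))
    (hB : quadraticChar F (β - 1) = quadraticChar F (2 * β))
    (hcond : (β ^ 2 + 1) / 2 ∈ QR F ∨ (β - 1) / 2 ∈ QR F) : False := by
  have hχ2 : quadraticChar F 2 ≠ 0 := by
    rw [Ne, quadraticChar_eq_zero_iff]; exact h2
  have h2β : quadraticChar F (2 * β) = - quadraticChar F 2 := by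
    rw [map_mul, hχβ]; ring
  rcases hcond with hc | hc
  · have h1 : quadraticChar F (β ^ 2 + 1) = quadraticChar F 2 := by
      have hq1 := qc_one_of_mem hc
      have he : (β ^ 2 + 1) = ((β ^ 2 + 1) / 2) * 2 := by field_simp
      rw [he, map_mul, hq1, one_mul]
    rw [h1, h2β] at hA
    omega
  · have h1 : quadraticChar F (β - 1) = quadraticChar F 2 := by
      have hq1 := qc_one_of_mem hc
      have he : (β - 1) = ((β - 1) / 2) * 2 := by field_simp
      rw [he, map_mul, hq1, one_mul]
    rw [h1, h2β] at hB
    omega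

lemma inf_core {β : F} (hχβ : quadraticChar F β = -1) (hβ0 : β ≠ 0) (hβ2 : β ≠ 2)
    (hβh : β ≠ 2⁻¹) {x u γ δ : F} {w : Option F}
    (hx : x ∈ QR F) (hu : u ∈ QR F)
    (hT : (γ = -u + δ ∧ w = some (-(u * β) + δ)) ∨ (γ = -(u * β) + δ ∧ w = some (-u + δ)))
    (hS : (w = some (x + γ) ∧ δ = x * β + γ) ∨ (w = some (x * β + γ) ∧ δ = x + γ)) :
    False := by
  rcases hT with ⟨hT1, hT2⟩ | ⟨hT1, hT2⟩ <;> rcases hS with ⟨hS1, hS2⟩ | ⟨hS1, hS2⟩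
  · exact beta_kill hχβ hu hx (by linear_combination hT1 + hS2)
  · have hw : -(u * β) + δ = x * β + γ := Option.some.inj (hT2.symm.trans hS1)
    have h0 : x * (2 * β - 1) = 0 := by linear_combination -hw - β * hT1 + (1 - β) * hS2
    rcases mul_eq_zero.mp h0 with h | h
    · exact hx.1 h
    · refine hβh (eq_inv_of_mul_eq_one_left ?_)
      linear_combination h
  · have hw : -u + δ = x + γ := Option.some.inj (hT2.symm.trans hS1)
    have h0 : x * (β * (β - 2)) = 0 := by
      linear_combination β * hw + hT1 + (1 - β) * hS2
    rcases mul_eq_zero.mp h0 with h | h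
    · exact hx.1 h
    · rcases mul_eq_zero.mp h with h | h
      · exact hβ0 h
      · exact hβ2 (by linear_combination h)
  · exact beta_kill hχβ hx hu (by linear_combination -hT1 - hS2)

lemma cycle_core {β : F}
    (hχβ : quadraticChar F β = -1) (hχm1 : quadraticChar F (-1 : F) = -1)
    (hβns : ¬ IsSquare β) (hm1 : ¬ IsSquare (-1 : F))
    (hβ0 : β ≠ 0) (hβ2 : β ≠ 2) (hβh : β ≠ 2⁻¹)
    (hcond : (β ^ 2 + 1) / 2 ∈ QR F ∨ (β - 1) / 2 ∈ QR F)
    (γ δ : F) (w0 w1 w2 w3 : Option F)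
    (h01 : s(w0, w1) ∈ genFactor β 1 γ) (h12 : s(w1, w2) ∈ genFactor β (-1) δ)
    (h23 : s(w2, w3) ∈ genFactor β 1 γ) (h30 : s(w3, w0) ∈ genFactor β (-1) δ)
    (d02 : w0 ≠ w2) (d13 : w1 ≠ w3) : False := by
  have h2 : (2 : F) ≠ 0 := two_nz hm1
  have hβ1 : β - 1 ≠ 0 := sub_ne_zero.mpr (fun h => hβns (h ▸ IsSquare.one))
  have hD : β ^ 2 + 1 ≠ 0 := fun h => hm1 ⟨β, by linear_combination -h⟩
  have hβ11 : (β - 1) * (β - 1) ≠ 0 := mul_ne_zero hβ1 hβ1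
  have h2β1 : 2 * β * (β - 1) ≠ 0 := mul_ne_zero (mul_ne_zero h2 hβ0) hβ1
  have h2β1' : 2 * (β - 1) ≠ 0 := mul_ne_zero h2 hβ1
  simp only [genFactor, Set.mem_union, Set.mem_singleton_iff, Set.mem_setOf_eq,
    Sym2.eq_iff, one_mul, neg_one_mul] at h01 h12 h23 h30
  rcases h01 with (⟨rfl, rfl⟩ | ⟨rfl, rfl⟩) | ⟨x, hx, (⟨rfl, rfl⟩ | ⟨rfl, rfl⟩)⟩
  · -- Branch A : w0 = none, w1 = some γ
    rcases h30 with (⟨-, hk⟩ | ⟨rfl, -⟩) | ⟨v, hv, (⟨-, hk⟩ | ⟨-, hk⟩)⟩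
    · exact (by cases hk)
    · rcases h12 with (⟨hk, -⟩ | ⟨-, rfl⟩) | ⟨u, hu, (⟨h12a, rfl⟩ | ⟨h12a, rfl⟩)⟩
      · exact (by cases hk)
      · exact d02 rfl
      · rcases h23 with (⟨hk, -⟩ | ⟨-, hk⟩) | ⟨x, hx, (⟨h23a, h23b⟩ | ⟨h23a, h23b⟩)⟩
        · exact (by cases hk)
        · exact (by cases hk)
        · exact inf_core hχβ hβ0 hβ2 hβh hx hu (Or.inl ⟨Option.some.inj h12a, rfl⟩)
            (Or.inl ⟨h23a, Option.some.inj h23b⟩)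
        · exact inf_core hχβ hβ0 hβ2 hβh hx hu (Or.inl ⟨Option.some.inj h12a, rfl⟩)
            (Or.inr ⟨h23a, Option.some.inj h23b⟩)
      · rcases h23 with (⟨hk, -⟩ | ⟨-, hk⟩) | ⟨x, hx, (⟨h23a, h23b⟩ | ⟨h23a, h23b⟩)⟩
        · exact (by cases hk)
        · exact (by cases hk)
        · exact inf_core hχβ hβ0 hβ2 hβh hx hu (Or.inr ⟨Option.some.inj h12a, rfl⟩)
            (Or.inl ⟨h23a, Option.some.inj h23b⟩)
        · exact inf_core hχβ hβ0 hβ2 hβh hx hu (Or.inr ⟨Option.some.inj h12a, rfl⟩)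
            (Or.inr ⟨h23a, Option.some.inj h23b⟩)
    · exact (by cases hk)
    · exact (by cases hk)
  · -- Branch B : w0 = some γ, w1 = none
    rcases h12 with (⟨-, rfl⟩ | ⟨hk, -⟩) | ⟨u, hu, (⟨hk, -⟩ | ⟨hk, -⟩)⟩
    · rcases h23 with (⟨hk, -⟩ | ⟨-, rfl⟩) | ⟨x, hx, (⟨h23a, rfl⟩ | ⟨h23a, rfl⟩)⟩
      · exact (by cases hk)
      · exact d13 rfl
      · rcases h30 with (⟨hk, -⟩ | ⟨-, hk⟩) | ⟨u, hu, (⟨h30a, h30b⟩ | ⟨h30a, h30b⟩)⟩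
        · exact (by cases hk)
        · exact (by cases hk)
        · exact inf_core hχβ hβ0 hβ2 hβh hx hu (Or.inr ⟨Option.some.inj h30b, h30a⟩)
            (Or.inr ⟨rfl, Option.some.inj h23a⟩)
        · exact inf_core hχβ hβ0 hβ2 hβh hx hu (Or.inl ⟨Option.some.inj h30b, h30a⟩)
            (Or.inr ⟨rfl, Option.some.inj h23a⟩)
      · rcases h30 with (⟨hk, -⟩ | ⟨-, hk⟩) | ⟨u, hu, (⟨h30a, h30b⟩ | ⟨h30a, h30b⟩)⟩
        · exact (by cases hk)
        · exact (by cases hk)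
        · exact inf_core hχβ hβ0 hβ2 hβh hx hu (Or.inr ⟨Option.some.inj h30b, h30a⟩)
            (Or.inl ⟨rfl, Option.some.inj h23a⟩)
        · exact inf_core hχβ hβ0 hβ2 hβh hx hu (Or.inl ⟨Option.some.inj h30b, h30a⟩)
            (Or.inl ⟨rfl, Option.some.inj h23a⟩)
    · exact (by cases hk)
    · exact (by cases hk)
    · exact (by cases hk)
  · -- Branch C : w0 = some (x+γ), w1 = some (x*β+γ)
    rcases h12 with (⟨hk, -⟩ | ⟨h12a, rfl⟩) | ⟨u, hu, (⟨h12a, rfl⟩ | ⟨h12a, rfl⟩)⟩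
    · exact (by cases hk)
    · -- position w2 : w2 = none, h12a : some (x*β+γ) = some δ
      rcases h23 with (⟨-, rfl⟩ | ⟨hk, -⟩) | ⟨y, hy, (⟨hk, -⟩ | ⟨hk, -⟩)⟩
      · rcases h30 with (⟨hk, -⟩ | ⟨-, hk⟩) | ⟨u, hu, (⟨h30a, h30b⟩ | ⟨h30a, h30b⟩)⟩
        · exact (by cases hk)
        · exact (by cases hk)
        · exact inf_core hχβ hβ0 hβ2 hβh hx hu (Or.inl ⟨Option.some.inj h30a, h30b⟩)
            (Or.inl ⟨rfl, (Option.some.inj h12a).symm⟩)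
        · exact inf_core hχβ hβ0 hβ2 hβh hx hu (Or.inr ⟨Option.some.inj h30a, h30b⟩)
            (Or.inl ⟨rfl, (Option.some.inj h12a).symm⟩)
      · exact (by cases hk)
      · exact (by cases hk)
      · exact (by cases hk)
    · -- h12 gen o1 : h12a : some (x*β+γ) = some (-u+δ), w2 = some (-(u*β)+δ)
      rcases h23 with (⟨hk, -⟩ | ⟨h23a, rfl⟩) | ⟨y, hy, (⟨h23a, rfl⟩ | ⟨h23a, rfl⟩)⟩
      · exact (by cases hk)
      · -- position w3 : w3 = none
        rcases h30 with (⟨-, h30b⟩ | ⟨hk, -⟩) | ⟨v, hv, (⟨hk, -⟩ | ⟨hk, -⟩)⟩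
        · exact inf_core hχβ hβ0 hβ2 hβh hx hu (Or.inr ⟨(Option.some.inj h23a).symm, h12a⟩)
            (Or.inr ⟨rfl, (Option.some.inj h30b).symm⟩)
        · exact (by cases hk)
        · exact (by cases hk)
        · exact (by cases hk)
      · -- h23 gen o1 : w3 = some (y*β+γ)
        rcases h30 with (⟨hk, -⟩ | ⟨-, hk⟩) | ⟨v, hv, (⟨h30a, h30b⟩ | ⟨h30a, h30b⟩)⟩
        · exact (by cases hk)
        · exact (by cases hk)
        · -- LEAF 1 (β,1,1,1)
          rw [Option.some.injEq] at h12a h23a h30a h30b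
          have hxy : y = x := cancel_factor hD
            (by linear_combination (-β) * h12a - h23a + β * h30a - h30b)
          exact d02 (congrArg Option.some (by linear_combination -h23a - hxy))
        · -- LEAF 2 (β,1,1,β)
          rw [Option.some.injEq] at h12a h23a h30a h30b
          have hI1 : u * (β - 1) = 2 * β * x := cancel_factor hβ1
            (by linear_combination (1 - 2*β) * h12a + (-β) * h23a + (-1) * h30a + β * h30b)
          have hI2 : v * (β - 1) = (β^2 + 1) * x := cancel_factor hβ1
            (by linear_combination (-β^2) * h12a + (-β) * h23a + (-1) * h30a + (1 - β + β^2) * h30b)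
          have hB := qc_eq_of_mul hu hx hI1
          have hA' := qc_eq_of_mul hv hx hI2
          exact double_kill hχβ h2 (hA'.symm.trans hB) hB hcond
      · -- h23 gen o2 : h23a : some (-(u*β)+δ) = some (y*β+γ), w3 = some (y+γ)
        rcases h30 with (⟨hk, -⟩ | ⟨-, hk⟩) | ⟨v, hv, (⟨h30a, h30b⟩ | ⟨h30a, h30b⟩)⟩
        · exact (by cases hk)
        · exact (by cases hk)
        · -- LEAF 3 (β,1,β,1)
          rw [Option.some.injEq] at h12a h23a h30a h30b
          have hI1 : y * (2*β) = (β^2 + 1) * x := by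
            linear_combination (-β) * h12a - h23a + β * h30a - h30b
          have hI2 : v * (2*β) = (β - 1) * x := cancel_factor hβ1
            (by linear_combination (-β) * h12a - h23a + (-β) * h30a + (2*β - 1) * h30b)
          have hA := qc_eq_of_mul hy hx hI1
          have hB := qc_eq_of_mul hv hx hI2
          exact double_kill hχβ h2 hA.symm hB.symm hcond
        · -- LEAF 4 (β,1,β,β)
          rw [Option.some.injEq] at h12a h23a h30a h30b
          have hI : v = -x := cancel_factor hβ11
            (by linear_combination β * h12a + h23a + β * h30a + (1 - 2*β) * h30b)
          exact neg_kill hχm1 hv hx hI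
    · -- h12 gen o2 : h12a : some (x*β+γ) = some (-(u*β)+δ), w2 = some (-u+δ)
      rcases h23 with (⟨hk, -⟩ | ⟨h23a, rfl⟩) | ⟨y, hy, (⟨h23a, rfl⟩ | ⟨h23a, rfl⟩)⟩
      · exact (by cases hk)
      · -- position w3
        rcases h30 with (⟨-, h30b⟩ | ⟨hk, -⟩) | ⟨v, hv, (⟨hk, -⟩ | ⟨hk, -⟩)⟩
        · exact inf_core hχβ hβ0 hβ2 hβh hx hu (Or.inl ⟨(Option.some.inj h23a).symm, h12a⟩)
            (Or.inr ⟨rfl, (Option.some.inj h30b).symm⟩)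
        · exact (by cases hk)
        · exact (by cases hk)
        · exact (by cases hk)
      · -- h23 gen o1 : w3 = some (y*β+γ)
        rcases h30 with (⟨hk, -⟩ | ⟨-, hk⟩) | ⟨v, hv, (⟨h30a, h30b⟩ | ⟨h30a, h30b⟩)⟩
        · exact (by cases hk)
        · exact (by cases hk)
        · -- LEAF 5 (β,β,1,1)
          rw [Option.some.injEq] at h12a h23a h30a h30b
          have hI1 : u * (β * (β - 1)) = (-(β^2 + 1)) * x := cancel_factor hβ1
            (by linear_combination (1 - β + β^2) * h12a + β^2 * h23a + β * h30a - h30b)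
          have hI2 : v * (β - 1) = (-2) * x := cancel_factor hβ1
            (by linear_combination h12a + β * h23a + h30a + (β - 2) * h30b)
          have e1 := qc_eq_of_mul hu hx hI1
          have e2 := qc_eq_of_mul hv hx hI2
          have c1 : quadraticChar F (β * (β - 1)) = - quadraticChar F (β - 1) := by
            rw [map_mul, hχβ]; ring
          have c2 : quadraticChar F (-(β^2 + 1) : F) = - quadraticChar F (β^2 + 1) := by
            rw [show (-(β^2 + 1) : F) = (-1) * (β^2 + 1) by ring, map_mul, hχm1]; ring
          have c3 : quadraticChar F (-2 : F) = quadraticChar F (2 * β) := by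
            rw [show (-2 : F) = (-1) * 2 by ring, map_mul, map_mul, hχm1, hχβ]; ring
          have hB : quadraticChar F (β - 1) = quadraticChar F (2 * β) := by rw [e2, c3]
          have hA : quadraticChar F (β^2 + 1) = quadraticChar F (2 * β) := by
            rw [c1, c2] at e1
            have : quadraticChar F (β^2 + 1) = quadraticChar F (β - 1) := by omega
            rw [this, hB]
          exact double_kill hχβ h2 hA hB hcond
        · -- LEAF 6 (β,β,1,β)
          rw [Option.some.injEq] at h12a h23a h30a h30b
          have hI : u = -x := cancel_factor h2β1
            (by linear_combination (2*β - 1) * h12a + β * h23a + h30a + (-β) * h30b)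
          exact neg_kill hχm1 hu hx hI
      · -- h23 gen o2 : w3 = some (y+γ)
        rcases h30 with (⟨hk, -⟩ | ⟨-, hk⟩) | ⟨v, hv, (⟨h30a, h30b⟩ | ⟨h30a, h30b⟩)⟩
        · exact (by cases hk)
        · exact (by cases hk)
        · -- LEAF 7 (β,β,β,1)
          rw [Option.some.injEq] at h12a h23a h30a h30b
          have hI : u = -x := cancel_factor hβ11
            (by linear_combination (β - 2) * h12a - h23a + (-β) * h30a + h30b)
          exact neg_kill hχm1 hu hx hI
        · -- LEAF 8 (β,β,β,β)
          rw [Option.some.injEq] at h12a h23a h30a h30b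
          have hI1 : y * (β^2 + 1) = (2*β) * x := by
            linear_combination (-1) * h12a + (-β) * h23a + h30a + (-β) * h30b
          have hI2 : v * (β^2 + 1) = (β - 1) * x := cancel_factor hβ1
            (by linear_combination h12a + β * h23a + β^2 * h30a + (-1 + β - β^2) * h30b)
          have hA := qc_eq_of_mul hy hx hI1
          have hB' := qc_eq_of_mul hv hx hI2
          exact double_kill hχβ h2 hA (hB'.symm.trans hA) hcond
  · -- Branch D : w0 = some (x*β+γ), w1 = some (x+γ)
    rcases h12 with (⟨hk, -⟩ | ⟨h12a, rfl⟩) | ⟨u, hu, (⟨h12a, rfl⟩ | ⟨h12a, rfl⟩)⟩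
    · exact (by cases hk)
    · -- position w2
      rcases h23 with (⟨-, rfl⟩ | ⟨hk, -⟩) | ⟨y, hy, (⟨hk, -⟩ | ⟨hk, -⟩)⟩
      · rcases h30 with (⟨hk, -⟩ | ⟨-, hk⟩) | ⟨u, hu, (⟨h30a, h30b⟩ | ⟨h30a, h30b⟩)⟩
        · exact (by cases hk)
        · exact (by cases hk)
        · exact inf_core hχβ hβ0 hβ2 hβh hx hu (Or.inl ⟨Option.some.inj h30a, h30b⟩)
            (Or.inr ⟨rfl, (Option.some.inj h12a).symm⟩)
        · exact inf_core hχβ hβ0 hβ2 hβh hx hu (Or.inr ⟨Option.some.inj h30a, h30b⟩)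
            (Or.inr ⟨rfl, (Option.some.inj h12a).symm⟩)
      · exact (by cases hk)
      · exact (by cases hk)
      · exact (by cases hk)
    · -- h12 gen o1 : h12a : some (x+γ) = some (-u+δ), w2 = some (-(u*β)+δ)
      rcases h23 with (⟨hk, -⟩ | ⟨h23a, rfl⟩) | ⟨y, hy, (⟨h23a, rfl⟩ | ⟨h23a, rfl⟩)⟩
      · exact (by cases hk)
      · -- position w3
        rcases h30 with (⟨-, h30b⟩ | ⟨hk, -⟩) | ⟨v, hv, (⟨hk, -⟩ | ⟨hk, -⟩)⟩
        · exact inf_core hχβ hβ0 hβ2 hβh hx hu (Or.inr ⟨(Option.some.inj h23a).symm, h12a⟩)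
            (Or.inl ⟨rfl, (Option.some.inj h30b).symm⟩)
        · exact (by cases hk)
        · exact (by cases hk)
        · exact (by cases hk)
      · -- h23 gen o1 : w3 = some (y*β+γ)
        rcases h30 with (⟨hk, -⟩ | ⟨-, hk⟩) | ⟨v, hv, (⟨h30a, h30b⟩ | ⟨h30a, h30b⟩)⟩
        · exact (by cases hk)
        · exact (by cases hk)
        · -- LEAF 9 (1,1,1,1)
          rw [Option.some.injEq] at h12a h23a h30a h30b
          have hI1 : y * (β^2 + 1) = (2*β) * x := by
            linear_combination (-β) * h12a - h23a + β * h30a - h30b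
          have hI2 : u * (β^2 + 1) = (β - 1) * x := cancel_factor hβ1
            (by linear_combination (-1 + β - β^2) * h12a + (-β^2) * h23a + (-β) * h30a + h30b)
          have hA := qc_eq_of_mul hy hx hI1
          have hB' := qc_eq_of_mul hu hx hI2
          exact double_kill hχβ h2 hA (hB'.symm.trans hA) hcond
        · -- LEAF 10 (1,1,1,β)
          rw [Option.some.injEq] at h12a h23a h30a h30b
          have hI : u = -x := cancel_factor hβ11
            (by linear_combination (1 - 2*β) * h12a + (-β) * h23a - h30a + β * h30b)
          exact neg_kill hχm1 hu hx hI
      · -- h23 gen o2 : w3 = some (y+γ)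
        rcases h30 with (⟨hk, -⟩ | ⟨-, hk⟩) | ⟨v, hv, (⟨h30a, h30b⟩ | ⟨h30a, h30b⟩)⟩
        · exact (by cases hk)
        · exact (by cases hk)
        · -- LEAF 11 (1,1,β,1)
          rw [Option.some.injEq] at h12a h23a h30a h30b
          have hI : u = -x := cancel_factor h2β1'
            (by linear_combination (β - 2) * h12a - h23a + (-β) * h30a + h30b)
          exact neg_kill hχm1 hu hx hI
        · -- LEAF 12 (1,1,β,β)
          rw [Option.some.injEq] at h12a h23a h30a h30b
          have hI1 : u * (β - 1) = (β^2 + 1) * x := cancel_factor hβ1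
            (by linear_combination (1 - β + β^2) * h12a + h23a + β * h30a + (-β^2) * h30b)
          have hI2 : v * (β - 1) = (2*β) * x := cancel_factor hβ1
            (by linear_combination β * h12a + h23a + β * h30a + (1 - 2*β) * h30b)
          have hA' := qc_eq_of_mul hu hx hI1
          have hB := qc_eq_of_mul hv hx hI2
          exact double_kill hχβ h2 (hA'.symm.trans hB) hB hcond
    · -- h12 gen o2 : h12a : some (x+γ) = some (-(u*β)+δ), w2 = some (-u+δ)
      rcases h23 with (⟨hk, -⟩ | ⟨h23a, rfl⟩) | ⟨y, hy, (⟨h23a, rfl⟩ | ⟨h23a, rfl⟩)⟩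
      · exact (by cases hk)
      · -- position w3
        rcases h30 with (⟨-, h30b⟩ | ⟨hk, -⟩) | ⟨v, hv, (⟨hk, -⟩ | ⟨hk, -⟩)⟩
        · exact inf_core hχβ hβ0 hβ2 hβh hx hu (Or.inl ⟨(Option.some.inj h23a).symm, h12a⟩)
            (Or.inl ⟨rfl, (Option.some.inj h30b).symm⟩)
        · exact (by cases hk)
        · exact (by cases hk)
        · exact (by cases hk)
      · -- h23 gen o1 : w3 = some (y*β+γ)
        rcases h30 with (⟨hk, -⟩ | ⟨-, hk⟩) | ⟨v, hv, (⟨h30a, h30b⟩ | ⟨h30a, h30b⟩)⟩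
        · exact (by cases hk)
        · exact (by cases hk)
        · -- LEAF 13 (1,β,1,1)
          rw [Option.some.injEq] at h12a h23a h30a h30b
          have hI : v = -x := cancel_factor hβ11
            (by linear_combination h12a + β * h23a + h30a + (β - 2) * h30b)
          exact neg_kill hχm1 hv hx hI
        · -- LEAF 14 (1,β,1,β)
          rw [Option.some.injEq] at h12a h23a h30a h30b
          have hI1 : y * (2*β) = (β^2 + 1) * x := by
            linear_combination -h12a - β * h23a + h30a - β * h30b
          have hI2 : u * (2*β) = (β - 1) * x := cancel_factor hβ1
            (by linear_combination (2*β - 1) * h12a + β * h23a + h30a - β * h30b)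
          have hA := qc_eq_of_mul hy hx hI1
          have hB := qc_eq_of_mul hu hx hI2
          exact double_kill hχβ h2 hA.symm hB.symm hcond
      · -- h23 gen o2 : w3 = some (y+γ)
        rcases h30 with (⟨hk, -⟩ | ⟨-, hk⟩) | ⟨v, hv, (⟨h30a, h30b⟩ | ⟨h30a, h30b⟩)⟩
        · exact (by cases hk)
        · exact (by cases hk)
        · -- LEAF 15 (1,β,β,1)
          rw [Option.some.injEq] at h12a h23a h30a h30b
          have hI1 : u * (β - 1) = (-2) * x := cancel_factor hβ1
            (by linear_combination (β - 2) * h12a - h23a + (-β) * h30a + h30b)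
          have hI2 : v * (β * (β - 1)) = (-(β^2 + 1)) * x := cancel_factor hβ1
            (by linear_combination -h12a - β * h23a + (-β^2) * h30a + (1 - β + β^2) * h30b)
          have e2 := qc_eq_of_mul hu hx hI1
          have e1 := qc_eq_of_mul hv hx hI2
          have c1 : quadraticChar F (β * (β - 1)) = - quadraticChar F (β - 1) := by
            rw [map_mul, hχβ]; ring
          have c2 : quadraticChar F (-(β^2 + 1) : F) = - quadraticChar F (β^2 + 1) := by
            rw [show (-(β^2 + 1) : F) = (-1) * (β^2 + 1) by ring, map_mul, hχm1]; ring
          have c3 : quadraticChar F (-2 : F) = quadraticChar F (2 * β) := by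
            rw [show (-2 : F) = (-1) * 2 by ring, map_mul, map_mul, hχm1, hχβ]; ring
          have hB : quadraticChar F (β - 1) = quadraticChar F (2 * β) := by rw [e2, c3]
          have hA : quadraticChar F (β^2 + 1) = quadraticChar F (2 * β) := by
            rw [c1, c2] at e1
            have : quadraticChar F (β^2 + 1) = quadraticChar F (β - 1) := by omega
            rw [this, hB]
          exact double_kill hχβ h2 hA hB hcond
        · -- LEAF 16 (1,β,β,β)
          rw [Option.some.injEq] at h12a h23a h30a h30b
          have hxy : y = x := cancel_factor hD
            (by linear_combination -h12a - β * h23a + h30a - β * h30b)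
          exact d02 (congrArg Option.some (by linear_combination -h23a - β * hxy))


lemma starterFactor_eq (β γ : F) : starterFactor β γ = genFactor β 1 γ := by
  simp only [starterFactor, genFactor, one_mul]

lemma negStarterFactor_eq (β γ : F) : negStarterFactor β γ = genFactor β (-1) γ := by
  simp only [negStarterFactor, genFactor, neg_one_mul]

lemma genFactor_matching {β : F} (hβns : ¬ IsSquare β) (ε θ : F) (hε : ε ≠ 0)
    {a b c : Option F} (hab : s(a, b) ∈ genFactor β ε θ) (hbc : s(b, c) ∈ genFactor β ε θ)
    (hac : a ≠ c) : False := by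
  have hχβ : quadraticChar F β = -1 := quadraticChar_neg_one_iff_not_isSquare.mpr hβns
  have hβ0 : β ≠ 0 := fun h => hβns (h ▸ ⟨0, by ring⟩)
  simp only [genFactor, Set.mem_union, Set.mem_singleton_iff, Set.mem_setOf_eq,
    Sym2.eq_iff] at hab hbc
  rcases hab with (⟨rfl, rfl⟩ | ⟨rfl, rfl⟩) | ⟨x, hx, (⟨rfl, rfl⟩ | ⟨rfl, rfl⟩)⟩
  · -- a = none, b = some θ
    rcases hbc with (⟨hb, rfl⟩ | ⟨hb, rfl⟩) | ⟨y, hy, (⟨hb, rfl⟩ | ⟨hb, rfl⟩)⟩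
    · exact Option.some_ne_none θ hb
    · exact hac rfl
    · rw [Option.some.injEq] at hb
      have h0 : ε * y = 0 := by linear_combination -hb
      rcases mul_eq_zero.mp h0 with h | h
      · exact hε h
      · exact hy.1 h
    · rw [Option.some.injEq] at hb
      have h0 : ε * (y * β) = 0 := by linear_combination -hb
      rcases mul_eq_zero.mp h0 with h | h
      · exact hε h
      · rcases mul_eq_zero.mp h with h | h
        · exact hy.1 h
        · exact hβ0 h
  · -- a = some θ, b = none
    rcases hbc with (⟨hb, rfl⟩ | ⟨hb, rfl⟩) | ⟨y, hy, (⟨hb, rfl⟩ | ⟨hb, rfl⟩)⟩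
    · exact hac rfl
    · exact (by cases hb)
    · exact (by cases hb)
    · exact (by cases hb)
  · -- a = some (ε*x+θ), b = some (ε*(x*β)+θ)
    rcases hbc with (⟨hb, rfl⟩ | ⟨hb, rfl⟩) | ⟨y, hy, (⟨hb, rfl⟩ | ⟨hb, rfl⟩)⟩
    · exact (by cases hb)
    · rw [Option.some.injEq] at hb
      have h0 : ε * (x * β) = 0 := by linear_combination hb
      rcases mul_eq_zero.mp h0 with h | h
      · exact hε h
      · rcases mul_eq_zero.mp h with h | h
        · exact hx.1 h
        · exact hβ0 h
    · rw [Option.some.injEq] at hb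
      have h0 : y = x * β :=
        (mul_left_cancel₀ hε (show ε * (x * β) = ε * y by linear_combination hb)).symm
      exact beta_kill hχβ hy hx h0
    · rw [Option.some.injEq] at hb
      have h0 : x = y := by
        have h1 : ε * β * (x - y) = 0 := by linear_combination hb
        rcases mul_eq_zero.mp h1 with h | h
        · rcases mul_eq_zero.mp h with h | h
          · exact absurd h hε
          · exact absurd h hβ0
        · exact sub_eq_zero.mp h
      exact hac (by rw [h0])
  · -- a = some (ε*(x*β)+θ), b = some (ε*x+θ)
    rcases hbc with (⟨hb, rfl⟩ | ⟨hb, rfl⟩) | ⟨y, hy, (⟨hb, rfl⟩ | ⟨hb, rfl⟩)⟩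
    · exact (by cases hb)
    · rw [Option.some.injEq] at hb
      have h0 : ε * x = 0 := by linear_combination hb
      rcases mul_eq_zero.mp h0 with h | h
      · exact hε h
      · exact hx.1 h
    · rw [Option.some.injEq] at hb
      have h0 : x = y := by
        have h1 : ε * (x - y) = 0 := by linear_combination hb
        rcases mul_eq_zero.mp h1 with h | h
        · exact absurd h hε
        · exact sub_eq_zero.mp h
      exact hac (by rw [h0])
    · rw [Option.some.injEq] at hb
      have h0 : x = y * β :=
        mul_left_cancel₀ hε (show ε * x = ε * (y * β) by linear_combination hb)
      exact beta_kill hχβ hx hy h0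


end Aux

/-- If `q ≡ 3 (mod 4)` is an odd prime power and `β ∈ NQR(q)`, `β ∉ {-1, 2, 2⁻¹}`,
and either `(β²+1)/2 ∈ QR(q)` or `(β-1)/2 ∈ QR(q)`, then the pair of one-factorizations
generated by the starters `S_β` and `-S_β` is C4-free. -/
theorem starter_negStarter_pair_C4_free (q : ℕ) (hq : q % 4 = 3)
    (F : Type*) [Field F] [Fintype F] (hcard : Fintype.card F = q)
    (β : F) (hβ : β ∈ NQR F) (hβne : β ∉ ({-1, 2, 2⁻¹} : Set F))
    (hcond : (β ^ 2 + 1) / 2 ∈ QR F ∨ (β - 1) / 2 ∈ QR F) :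
    ∀ γ δ : F,
      ¬ HasC4 (SimpleGraph.fromEdgeSet (starterFactor β γ ∪ negStarterFactor β δ)) := by
  classical
  intro γ δ hC4
  have hm1 : ¬ IsSquare (-1 : F) := fun h =>
    (FiniteField.isSquare_neg_one_iff.mp h) (by rw [hcard]; exact hq)
  have hβns : ¬ IsSquare β := fun hsq => by
    obtain ⟨r, hr⟩ := hsq
    exact hβ.2 ⟨r, by rw [hr]; ring⟩
  have hβ0 : β ≠ 0 := hβ.1
  simp only [Set.mem_insert_iff, Set.mem_singleton_iff, not_or] at hβne
  obtain ⟨hβm1, hβ2, hβh⟩ := hβne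
  have hχβ : quadraticChar F β = -1 := (quadraticChar_neg_one_iff_not_isSquare).mpr hβns
  have hχm1 : quadraticChar F (-1 : F) = -1 :=
    (quadraticChar_neg_one_iff_not_isSquare).mpr hm1
  obtain ⟨v0, w, hcyc, hlen⟩ := hC4
  cases w with
  | nil => simp at hlen
  | cons h1 p =>
  rename_i v1
  cases p with
  | nil => simp at hlen
  | cons h2 p =>
  rename_i v2
  cases p with
  | nil => simp at hlen
  | cons h3 p =>
  rename_i v3
  cases p with
  | nil => simp at hlen
  | cons h4 p =>
  rename_i v4
  cases p with
  | cons h5 p => simp at hlen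
  | nil =>
  -- now h1 : Adj v0 v1, h2 : Adj v1 v2, h3 : Adj v2 v3, h4 : Adj v3 v0 (v4 = v0)
  have hnd := hcyc.support_nodup
  simp only [SimpleGraph.Walk.support_cons, SimpleGraph.Walk.support_nil, List.tail_cons,
    List.nodup_cons, List.mem_cons, List.mem_singleton, List.not_mem_nil, or_false,
    not_or, List.nodup_nil, and_true] at hnd
  obtain ⟨⟨h12ne, h13ne, h10ne⟩, ⟨h23ne, h20ne⟩, h30ne⟩ := hnd
  replace h20ne : v0 ≠ v2 := fun h => h20ne h.symm
  rw [SimpleGraph.fromEdgeSet_adj] at h1 h2 h3 h4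
  obtain ⟨m1, ne1⟩ := h1
  obtain ⟨m2, ne2⟩ := h2
  obtain ⟨m3, ne3⟩ := h3
  obtain ⟨m4, ne4⟩ := h4
  rw [starterFactor_eq, negStarterFactor_eq, Set.mem_union] at m1 m2 m3 m4
  have hone : (1 : F) ≠ 0 := one_ne_zero
  have hnegone : (-1 : F) ≠ 0 := neg_ne_zero.mpr one_ne_zero
  rcases m1 with hS1 | hT1
  · -- s(v0,v1) ∈ S
    have hT2 : s(v1, v2) ∈ genFactor β (-1) δ := by
      rcases m2 with h | h
      · exact (genFactor_matching hβns 1 γ hone hS1 h h20ne).elim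
      · exact h
    have hS3 : s(v2, v3) ∈ genFactor β 1 γ := by
      rcases m3 with h | h
      · exact h
      · exact (genFactor_matching hβns (-1) δ hnegone hT2 h h13ne).elim
    have hT4 : s(v3, v0) ∈ genFactor β (-1) δ := by
      rcases m4 with h | h
      · exact (genFactor_matching hβns 1 γ hone hS3 h (fun h' => h20ne h'.symm)).elim
      · exact h
    exact cycle_core hχβ hχm1 hβns hm1 hβ0 hβ2 hβh hcond γ δ v0 v1 v2 v3
      hS1 hT2 hS3 hT4 h20ne h13ne
  · -- s(v0,v1) ∈ T
    have hS2 : s(v1, v2) ∈ genFactor β 1 γ := by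
      rcases m2 with h | h
      · exact h
      · exact (genFactor_matching hβns (-1) δ hnegone hT1 h h20ne).elim
    have hT3 : s(v2, v3) ∈ genFactor β (-1) δ := by
      rcases m3 with h | h
      · exact (genFactor_matching hβns 1 γ hone hS2 h h13ne).elim
      · exact h
    have hS4 : s(v3, v0) ∈ genFactor β 1 γ := by
      rcases m4 with h | h
      · exact h
      · exact (genFactor_matching hβns (-1) δ hnegone hT3 h (fun h' : v2 = v0 => h20ne h'.symm)).elim
    exact cycle_core hχβ hχm1 hβns hm1 hβ0 hβ2 hβh hcond γ δ v1 v2 v3 v0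
      hS2 hT3 hS4 hT1 h13ne (fun h' : v2 = v0 => h20ne h'.symm)
end

section
/- Let q ≡ 3 (mod 4) be an odd prime power with q ≠ 3. Then there exists β ∈ NQR(q) such that (β+1)(β−1) ∈ NQR(q). -/
/-- If `q ≡ 3 (mod 4)` is an odd prime power with `q ≠ 3`, then there is a
non-square `β` such that `(β+1)(β-1)` is a non-square. -/
theorem exists_nonsquare_product_nonsquare (q : ℕ) (hq : q % 4 = 3) (hq3 : q ≠ 3)
    (F : Type*) [Field F] [Fintype F] (hcard : Fintype.card F = q) :
    ∃ β ∈ NQR F, (β + 1) * (β - 1) ∈ NQR F := by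
  classical
  by_contra hcon
  push_neg at hcon
  have hchar : ringChar F ≠ 2 := by
    intro h
    have h2 := (FiniteField.even_card_iff_char_two).mp h
    rw [hcard] at h2
    omega
  set χ := quadraticChar F with hχdef
  have hχ1 : χ ≠ 1 := quadraticChar_ne_one hchar
  have hneg1 : χ (-1) = -1 := by
    rw [hχdef, quadraticChar_neg_one hchar, hcard, ZMod.χ₄_nat_three_mod_four hq]
  have h2F : (2 : F) ≠ 0 := Ring.two_ne_zero hchar
  -- membership in NQR from character value
  have hmem : ∀ x : F, χ x = -1 → x ∈ NQR F := by
    intro x hx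
    have hns : ¬ IsSquare x := (quadraticChar_neg_one_iff_not_isSquare).mp hx
    have hx0 : x ≠ 0 := by
      rintro rfl
      rw [hχdef, quadraticChar_zero] at hx
      norm_num at hx
    exact ⟨hx0, fun ⟨y, hy⟩ => hns ⟨y, by rw [← hy]; ring⟩⟩
  -- First sum : ∑ χ β = 0
  have hS0 : ∑ β : F, χ β = 0 := quadraticChar_sum_zero hchar
  -- Jacobi sum : ∑ χ x * χ (1 - x) = 1
  have hJ : ∑ x : F, χ x * χ (1 - x) = 1 := by
    have h := jacobiSum_nontrivial_inv (χ := χ) hχ1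
    rw [(quadraticChar_isQuadratic F).inv] at h
    simp only [jacobiSum] at h
    rw [h, hneg1]
    ring
  -- Second sum : ∑ χ (β² - 1) = -1
  have hsum1 : ∑ β : F, χ (β ^ 2 - 1) = -1 := by
    have he : Function.Bijective (fun x : F => 1 - 2 * x) := by
      refine Function.bijective_iff_has_inverse.mpr ⟨fun y => (1 - y) / 2, fun x => ?_, fun y => ?_⟩
      · field_simp; ring
      · field_simp; ring
    have hbij := Fintype.sum_bijective (fun x : F => 1 - 2 * x) he
      (fun x : F => χ ((1 - 2 * x) ^ 2 - 1)) (fun β : F => χ (β ^ 2 - 1)) (fun x => rfl)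
    rw [← hbij]
    have hpt : ∀ x : F, χ ((1 - 2 * x) ^ 2 - 1) = -(χ x * χ (1 - x)) := by
      intro x
      have hid : (1 - 2 * x) ^ 2 - 1 = (-1) * (2 ^ 2 * (x * (1 - x))) := by ring
      rw [hid, map_mul, map_mul, map_mul, hneg1, hχdef, quadraticChar_sq_one' h2F]
      ring
    rw [Finset.sum_congr rfl (fun x _ => hpt x), Finset.sum_neg_distrib, hJ]
  -- Third sum : ∑ χ β * χ (β² - 1) = 0 via the involution β ↦ β⁻¹
  have hS : ∑ β : F, χ β * χ (β ^ 2 - 1) = 0 := by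
    have key : ∀ β : F, χ β⁻¹ * χ ((β⁻¹) ^ 2 - 1) = -(χ β * χ (β ^ 2 - 1)) := by
      intro β
      rcases eq_or_ne β 0 with rfl | hβ0
      · simp [hχdef, quadraticChar_zero]
      rcases eq_or_ne (β ^ 2) 1 with hβ1 | hβ1
      · have h1 : (β⁻¹) ^ 2 = 1 := by rw [inv_pow, hβ1, inv_one]
        rw [hβ1, h1, sub_self]
        simp [hχdef, quadraticChar_zero]
      · have hβinv : χ β⁻¹ = χ β := by
          have hmul : χ β * χ β⁻¹ = 1 := by
            rw [← map_mul, mul_inv_cancel₀ hβ0, map_one]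
          rcases quadraticChar_dichotomy (F := F) hβ0 with h | h <;>
            rw [hχdef] at * <;> rw [h] at hmul ⊢ <;> linarith
        have hid : (β⁻¹) ^ 2 - 1 = (β⁻¹) ^ 2 * ((-1) * (β ^ 2 - 1)) := by
          field_simp; ring
        rw [hid, map_mul, map_mul, hneg1, hβinv, hχdef,
          quadraticChar_sq_one' (inv_ne_zero hβ0)]
        ring
    have hinv := Fintype.sum_bijective (fun β : F => β⁻¹)
      (Function.Involutive.bijective (fun β : F => inv_inv β))
      (fun β : F => χ β⁻¹ * χ ((β⁻¹) ^ 2 - 1)) (fun β : F => χ β * χ (β ^ 2 - 1))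
      (fun β => rfl)
    have heq : ∑ β : F, χ β * χ (β ^ 2 - 1) = -∑ β : F, χ β * χ (β ^ 2 - 1) := by
      conv_lhs => rw [← hinv]
      rw [Finset.sum_congr rfl (fun β _ => key β), Finset.sum_neg_distrib]
    linarith
  -- The total sum equals q + 1
  have hA : ∑ β : F, (1 - χ β) * (1 - χ (β ^ 2 - 1)) = (q : ℤ) + 1 := by
    have hexp : ∀ β : F, (1 - χ β) * (1 - χ (β ^ 2 - 1)) =
        1 - χ β - χ (β ^ 2 - 1) + χ β * χ (β ^ 2 - 1) := fun β => by ring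
    rw [Finset.sum_congr rfl (fun β _ => hexp β), Finset.sum_add_distrib,
      Finset.sum_sub_distrib, Finset.sum_sub_distrib, hS0, hsum1, hS,
      Finset.sum_const, Finset.card_univ, hcard]
    ring
  -- Under the contradiction hypothesis, each term is concentrated at 0 and -1
  have hne01 : (0 : F) ≠ -1 := by
    intro h
    exact one_ne_zero (neg_eq_zero.mp h.symm)
  have hne1m1 : (1 : F) ≠ -1 := by
    intro h
    exact Ring.neg_one_ne_one_of_char_ne_two hchar h.symm
  have hterm : ∀ β : F, (1 - χ β) * (1 - χ (β ^ 2 - 1)) =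
      (if β = 0 then 2 else 0) + (if β = -1 then 2 else 0) := by
    intro β
    rcases eq_or_ne β 0 with rfl | h0
    · have h01 : (0 : F) ^ 2 - 1 = -1 := by ring
      rw [h01, hneg1, hχdef, quadraticChar_zero, if_pos rfl, if_neg hne01]
      ring
    rcases eq_or_ne β (-1) with rfl | hm1
    · have h11 : (-1 : F) ^ 2 - 1 = 0 := by ring
      rw [h11, hχdef, quadraticChar_zero, hneg1, if_neg (Ne.symm hne01), if_pos rfl]
      ring
    rw [if_neg h0, if_neg hm1]
    rcases eq_or_ne β 1 with rfl | h1
    · rw [map_one]; ring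
    rcases quadraticChar_dichotomy (F := F) h0 with hχβ | hχβ
    · rw [← hχdef] at hχβ; rw [hχβ]; ring
    · have hβN : β ∈ NQR F := hmem β hχβ
      have hsqne : β ^ 2 - 1 ≠ 0 := by
        intro h
        have hfac : (β - 1) * (β + 1) = 0 := by linear_combination h
        rcases mul_eq_zero.mp hfac with h' | h'
        · exact h1 (by linear_combination h')
        · exact hm1 (by linear_combination h')
      have hχsq : χ (β ^ 2 - 1) = 1 := by
        rcases quadraticChar_dichotomy (F := F) hsqne with h | h
        · exact h
        · exfalso
          apply hcon β hβN
          have hrw : (β + 1) * (β - 1) = β ^ 2 - 1 := by ring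
          rw [hrw]
          exact hmem _ h
      rw [hχsq]; ring
  have h4 : ∑ β : F, (1 - χ β) * (1 - χ (β ^ 2 - 1)) = 4 := by
    rw [Finset.sum_congr rfl (fun β _ => hterm β), Finset.sum_add_distrib,
      Finset.sum_ite_eq' Finset.univ (0 : F) (fun _ => (2 : ℤ)),
      Finset.sum_ite_eq' Finset.univ (-1 : F) (fun _ => (2 : ℤ))]
    simp
  have hq3' : (q : ℤ) = 3 := by linarith [hA, h4]
  exact hq3 (by exact_mod_cast hq3')
end

section
/- Let q ≡ 3 (mod 4) be an odd prime power with q ≠ 3. Then there exists α ∈ QR(q) such that (α+1)(α−1) ∈ NQR(q). -/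
lemma isSquare_iff_exists_sq' {F : Type*} [Field F] (x : F) :
    IsSquare x ↔ ∃ y, y ^ 2 = x := by
  constructor
  · rintro ⟨r, rfl⟩; exact ⟨r, (sq r).symm ▸ rfl⟩
  · rintro ⟨y, rfl⟩; exact ⟨y, (sq y)⟩

lemma mul_nonsquares {F : Type*} [Field F] [Fintype F] (hF : ringChar F ≠ 2)
    {y z : F} (hy : y ≠ 0) (hz : z ≠ 0) (hy' : ¬IsSquare y) (hz' : ¬IsSquare z) :
    IsSquare (y * z) := by
  rw [FiniteField.isSquare_iff hF (mul_ne_zero hy hz)]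
  rcases FiniteField.pow_dichotomy hF hy with h1 | h1
  · exact absurd ((FiniteField.isSquare_iff hF hy).mpr h1) hy'
  rcases FiniteField.pow_dichotomy hF hz with h2 | h2
  · exact absurd ((FiniteField.isSquare_iff hF hz).mpr h2) hz'
  rw [mul_pow, h1, h2]; ring

/-- If `q ≡ 3 (mod 4)` is an odd prime power with `q ≠ 3`, then there is a
square `α` such that `(α+1)(α-1)` is a non-square. -/
theorem exists_square_product_nonsquare (q : ℕ) (hq : q % 4 = 3) (hq3 : q ≠ 3)
    (F : Type*) [Field F] [Fintype F] (hcard : Fintype.card F = q) :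
    ∃ α ∈ QR F, (α + 1) * (α - 1) ∈ NQR F := by
  by_contra hcon
  push_neg at hcon
  have hchar : ringChar F ≠ 2 := by
    intro h
    have := FiniteField.even_card_of_char_two h
    omega
  have hm1 : ¬ IsSquare (-1 : F) := by
    rw [FiniteField.isSquare_neg_one_iff, hcard]
    simpa using hq
  -- key step: if s is a nonzero square, s ≠ 1, then s - 1 is a nonzero square
  have key : ∀ s : F, s ≠ 0 → IsSquare s → s ≠ 1 → (s - 1 ≠ 0 ∧ IsSquare (s - 1)) := by
    intro s hs0 hs hs1
    obtain ⟨y, rfl⟩ := hs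
    have hy0 : y ≠ 0 := by intro h; exact hs0 (by simp [h])
    -- find a square α with α^2 = y * y
    obtain ⟨α, hα, hα2⟩ : ∃ α : F, IsSquare α ∧ α * α = y * y := by
      by_cases hys : IsSquare y
      · exact ⟨y, hys, rfl⟩
      · have hneg : IsSquare ((-1 : F) * y) :=
          mul_nonsquares hchar (neg_ne_zero.mpr one_ne_zero) hy0 hm1 hys
        exact ⟨-y, by simpa using hneg, by ring⟩
    have hα0 : α ≠ 0 := by
      intro h; rw [h] at hα2; exact hs0 (by rw [← hα2]; ring)
    have hαQR : α ∈ QR F := ⟨hα0, (isSquare_iff_exists_sq' α).mp hα⟩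
    have := hcon α hαQR
    have hprod : (α + 1) * (α - 1) = y * y - 1 := by rw [← hα2]; ring
    have hne : y * y - 1 ≠ 0 := sub_ne_zero.mpr hs1
    constructor
    · exact hne
    · rw [hprod] at this
      by_contra hns
      exact this ⟨hne, fun h => hns ((isSquare_iff_exists_sq' _).mpr h)⟩
  -- there exist two distinct nonzero squares
  obtain ⟨a, b, ha0, hb0, ha, hb, hab⟩ :
      ∃ a b : F, a ≠ 0 ∧ b ≠ 0 ∧ IsSquare a ∧ IsSquare b ∧ a ≠ b := by
    by_contra hne
    push_neg at hne
    classical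
    have hall : ∀ x : F, x = 0 ∨ x = 1 ∨ x = -1 := by
      intro x
      by_cases hx : x = 0
      · exact Or.inl hx
      · have h1 : x * x = 1 :=
          hne (x * x) 1 (mul_ne_zero hx hx) one_ne_zero ⟨x, rfl⟩ IsSquare.one
        have : (x - 1) * (x + 1) = 0 := by ring_nf; rw [mul_comm] at h1; linear_combination h1
        rcases mul_eq_zero.mp this with h | h
        · exact Or.inr (Or.inl (sub_eq_zero.mp h))
        · exact Or.inr (Or.inr (eq_neg_of_add_eq_zero_left h))
    have hsub : (Finset.univ : Finset F) ⊆ {0, 1, -1} := by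
      intro x _
      rcases hall x with h | h | h <;> simp [h]
    have hcard3 : Fintype.card F ≤ 3 := by
      calc Fintype.card F = (Finset.univ : Finset F).card := rfl
        _ ≤ ({0, 1, -1} : Finset F).card := Finset.card_le_card hsub
        _ ≤ 3 := by
            apply le_trans (Finset.card_insert_le _ _)
            exact Nat.succ_le_succ (le_trans (Finset.card_insert_le _ _)
              (Nat.succ_le_succ (le_of_eq (Finset.card_singleton _))))
    omega
  -- derive a contradiction
  have hs : a * b⁻¹ ≠ 1 := fun h => hab (by field_simp at h; exact h)
  have ht : b * a⁻¹ ≠ 1 := fun h => hab (by field_simp at h; exact h.symm)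
  obtain ⟨hs0, hssq⟩ := key (a * b⁻¹) (mul_ne_zero ha0 (inv_ne_zero hb0))
    (ha.mul hb.inv) hs
  obtain ⟨ht0, htsq⟩ := key (b * a⁻¹) (mul_ne_zero hb0 (inv_ne_zero ha0))
    (hb.mul ha.inv) ht
  have hkey2 : (a * b⁻¹ - 1) = (-1) * ((b * a⁻¹ - 1) * (a * b⁻¹)) := by
    field_simp
    ring
  have hXne : (b * a⁻¹ - 1) * (a * b⁻¹) ≠ 0 :=
    mul_ne_zero ht0 (mul_ne_zero ha0 (inv_ne_zero hb0))
  have hX : IsSquare ((b * a⁻¹ - 1) * (a * b⁻¹)) := htsq.mul (ha.mul hb.inv)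
  have : IsSquare (-1 : F) := by
    have heq : (-1 : F) = (a * b⁻¹ - 1) * ((b * a⁻¹ - 1) * (a * b⁻¹))⁻¹ := by
      rw [hkey2, mul_assoc, mul_inv_cancel₀ hXne, mul_one]
    rw [heq]
    exact hssq.mul hX.inv
  exact hm1 this
end

section
/- Let q ≡ 3 (mod 4) be an odd prime power with q ≥ 11. Then there exists β ∈ NQR(q) with β ∉ {−1, 2, 2⁻¹} and β³ ≠ −1 such that (β²+1)/2 ∈ QR(q) or (β−1)/2 ∈ QR(q). -/
open Finset

/-- Sum of χ(x(x-1)) over a finite field of odd characteristic is -1. -/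
lemma sum_quadChar_mul_sub_one (F : Type*) [Field F] [Fintype F] [DecidableEq F]
    (hchar : ringChar F ≠ 2) :
    ∑ x : F, quadraticChar F (x * (x - 1)) = -1 := by
  have h0 : ∑ x : F, quadraticChar F (x * (x - 1))
      = ∑ x ∈ univ.erase (0 : F), quadraticChar F (x * (x - 1)) := by
    rw [Finset.sum_erase_eq_sub (mem_univ _)]
    simp
  rw [h0]
  have h1 : ∑ x ∈ univ.erase (0 : F), quadraticChar F (x * (x - 1))
      = ∑ y ∈ univ.erase (1 : F), quadraticChar F y := by
    refine Finset.sum_nbij' (fun x => 1 - x⁻¹) (fun y => (1 - y)⁻¹) ?_ ?_ ?_ ?_ ?_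
    · intro a ha
      simp only [mem_erase, mem_univ, and_true] at ha ⊢
      intro h
      have : a⁻¹ = 0 := by linear_combination -h
      exact ha (inv_eq_zero.mp this)
    · intro b hb
      simp only [mem_erase, mem_univ, and_true] at hb ⊢
      intro h
      have : (1 : F) - b = 0 := by
        by_contra hc
        exact hc (by rw [← inv_inv (1 - b), h, inv_zero])
      exact hb (by linear_combination -this)
    · intro a ha
      simp only [mem_erase, mem_univ, and_true] at ha
      rw [show (1 : F) - (1 - a⁻¹) = a⁻¹ from by ring, inv_inv]
    · intro b hb
      simp only [mem_erase, mem_univ, and_true] at hb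
      rw [inv_inv]
      ring
    · intro a ha
      simp only [mem_erase, mem_univ, and_true] at ha
      have : a * (a - 1) = a ^ 2 * (1 - a⁻¹) := by
        field_simp
      rw [this, map_mul, quadraticChar_sq_one' ha, one_mul]
  rw [h1, Finset.sum_erase_eq_sub (mem_univ _), quadraticChar_sum_zero hchar, map_one]
  norm_num

/-- If `q ≡ 3 (mod 4)` is an odd prime power with `q ≥ 11`, then there is a
non-square `β ∉ {-1, 2, 2⁻¹}` with `β³ ≠ -1` such that `(β²+1)/2 ∈ QR(q)` or
`(β-1)/2 ∈ QR(q)`. -/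
theorem exists_good_beta (q : ℕ) (hq : q % 4 = 3) (hge : 11 ≤ q)
    (F : Type*) [Field F] [Fintype F] (hcard : Fintype.card F = q) :
    ∃ β ∈ NQR F, β ∉ ({-1, 2, 2⁻¹} : Set F) ∧ β ^ 3 ≠ -1 ∧
      ((β ^ 2 + 1) / 2 ∈ QR F ∨ (β - 1) / 2 ∈ QR F) := by
  classical
  have hchar : ringChar F ≠ 2 := by
    intro h
    have := FiniteField.even_card_of_char_two h
    rw [hcard] at this; omega
  have h2ne : (2 : F) ≠ 0 := Ring.two_ne_zero hchar
  have hm1 : ¬ IsSquare (-1 : F) := by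
    rw [FiniteField.isSquare_neg_one_iff, hcard, hq]; omega
  have hχm1 : quadraticChar F (-1) = -1 := quadraticChar_neg_one_iff_not_isSquare.mpr hm1
  set χ : MulChar F ℤ := quadraticChar F with hχdef
  -- χ 2 and χ 2⁻¹
  set c : ℤ := χ 2 with hcdef
  have hcd : c = 1 ∨ c = -1 := quadraticChar_dichotomy h2ne
  have hinv : χ (2⁻¹ : F) = c := by
    have h : c * χ (2⁻¹ : F) = 1 := by
      rw [hcdef, ← map_mul, mul_inv_cancel₀ h2ne, map_one]
    rcases hcd with h1 | h1 <;> rw [h1] at h ⊢ <;> omega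
  -- the sets
  set S : Finset F := univ.filter (fun β => χ β = -1 ∧ χ ((β - 1) / 2) = 1) with hSdef
  set B : Finset F := univ.filter (fun β : F => β ^ 2 - β + 1 = 0) with hBdef
  set A : Finset F := (univ.erase (0 : F)).erase 1 with hAdef
  have hmemA : ∀ x : F, x ∈ A ↔ x ≠ 1 ∧ x ≠ 0 := by
    intro x; simp [hAdef]
  -- the master count
  have hcount : 4 * (S.card : ℤ) = (q : ℤ) - 1 + 2 * c := by
    have hsplit : ∀ β ∈ A, (1 - χ β) * (1 + χ ((β - 1) / 2))
        = (if χ β = -1 ∧ χ ((β - 1) / 2) = 1 then (4 : ℤ) else 0) := by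
      intro β hβ
      rw [hmemA] at hβ
      have hβ0 : β ≠ 0 := hβ.2
      have hd0 : (β - 1) / 2 ≠ 0 := by
        intro h
        rw [div_eq_zero_iff] at h
        rcases h with h | h
        · exact hβ.1 (by linear_combination h)
        · exact h2ne h
      rcases (quadraticChar_dichotomy hβ0 : χ β = 1 ∨ χ β = -1) with h1 | h1 <;>
        rcases (quadraticChar_dichotomy hd0 : χ ((β - 1) / 2) = 1 ∨ χ ((β - 1) / 2) = -1) with h2 | h2 <;>
        rw [h1, h2] <;> norm_num
    have hSA : A.filter (fun β => χ β = -1 ∧ χ ((β - 1) / 2) = 1) = S := by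
      ext β
      simp only [mem_filter, hmemA, hSdef, mem_univ, true_and, and_iff_right_iff_imp]
      intro h
      constructor
      · intro h1; rw [h1, map_one] at h; omega
      · intro h1; rw [h1, MulChar.map_zero] at h; omega
    have step1 : ∑ β ∈ A, (1 - χ β) * (1 + χ ((β - 1) / 2)) = 4 * (S.card : ℤ) := by
      rw [Finset.sum_congr rfl hsplit, ← Finset.sum_filter, hSA, Finset.sum_const,
        nsmul_eq_mul]
      ring
    -- expand
    have T1 : ∑ _β ∈ A, (1 : ℤ) = (q : ℤ) - 2 := by
      rw [Finset.sum_const, nsmul_eq_mul, mul_one, hAdef]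
      rw [Finset.card_erase_of_mem, Finset.card_erase_of_mem (mem_univ _)]
      · rw [Finset.card_univ, hcard]
        have : 2 ≤ q := by omega
        push_cast [Nat.cast_sub (by omega : 1 ≤ q)]
        omega
      · simp [one_ne_zero]
    have T2 : ∑ β ∈ A, χ β = -1 := by
      rw [hAdef, Finset.sum_erase_eq_sub (by simp), Finset.sum_erase_eq_sub (mem_univ _),
        quadraticChar_sum_zero hchar]
      simp [hχdef]
    have huniv3 : ∑ β : F, χ ((β - 1) / 2) = 0 := by
      have hb : Function.Bijective (fun β : F => (β - 1) / 2) := by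
        rw [Fintype.bijective_iff_injective_and_card]
        refine ⟨fun a b h => ?_, rfl⟩
        field_simp at h
        linear_combination h
      rw [Fintype.sum_bijective _ hb _ χ (fun x => rfl)]
      exact quadraticChar_sum_zero hchar
    have T3 : ∑ β ∈ A, χ ((β - 1) / 2) = c := by
      rw [hAdef, Finset.sum_erase_eq_sub (by simp), Finset.sum_erase_eq_sub (mem_univ _), huniv3]
      have e1 : ((1 : F) - 1) / 2 = 0 := by ring
      have e2 : ((0 : F) - 1) / 2 = -1 * 2⁻¹ := by ring
      rw [e1, e2, map_mul, MulChar.map_zero, hχm1]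
      rw [hinv]; ring
    have T4 : ∑ β ∈ A, χ β * χ ((β - 1) / 2) = -c := by
      have key := sum_quadChar_mul_sub_one F hchar
      have hA4 : ∑ β ∈ A, χ β * χ ((β - 1) / 2) = ∑ β ∈ A, χ (2⁻¹) * χ (β * (β - 1)) := by
        refine Finset.sum_congr rfl fun β _ => ?_
        rw [← map_mul, ← map_mul]
        congr 1
        field_simp
      rw [hA4, ← Finset.mul_sum, hinv]
      have hAsum : ∑ β ∈ A, χ (β * (β - 1)) = -1 := by
        rw [hAdef, Finset.sum_erase_eq_sub (by simp), Finset.sum_erase_eq_sub (mem_univ _), key]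
        norm_num [MulChar.map_zero]
      rw [hAsum]; ring
    have expand : ∑ β ∈ A, (1 - χ β) * (1 + χ ((β - 1) / 2))
        = (∑ _β ∈ A, (1 : ℤ)) - (∑ β ∈ A, χ β) + (∑ β ∈ A, χ ((β - 1) / 2))
          - ∑ β ∈ A, χ β * χ ((β - 1) / 2) := by
      rw [← Finset.sum_sub_distrib, ← Finset.sum_add_distrib, ← Finset.sum_sub_distrib]
      refine Finset.sum_congr rfl fun β _ => ?_
      ring
    rw [← step1, expand, T1, T2, T3, T4]
    ring
  -- card B ≤ 2
  have hBcard : B.card ≤ 2 := by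
    rcases Finset.eq_empty_or_nonempty B with h | ⟨a, ha⟩
    · simp [h]
    · have haB : a ^ 2 - a + 1 = 0 := by
        rw [hBdef] at ha; simpa using ha
      have hsub : B ⊆ {a, 1 - a} := by
        intro b hb
        have hbB : b ^ 2 - b + 1 = 0 := by rw [hBdef] at hb; simpa using hb
        have : (b - a) * (b + a - 1) = 0 := by linear_combination hbB - haB
        rcases mul_eq_zero.mp this with h | h
        · simp [show b = a by linear_combination h]
        · simp [show b = 1 - a by linear_combination h, Finset.mem_insert]
      calc B.card ≤ ({a, 1 - a} : Finset F).card := Finset.card_le_card hsub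
        _ ≤ 2 := Finset.card_insert_le _ _ |>.trans (by simp)
  -- find β ∈ S \ B
  have hSB : (S \ B).Nonempty := by
    rcases hcd with hc1 | hc1
    · -- c = 1 : card S ≥ 3
      have h3 : 3 ≤ S.card := by
        rw [hc1] at hcount
        have : (q : ℤ) ≥ 11 := by exact_mod_cast hge
        omega
      rw [← Finset.card_pos]
      have := Finset.le_card_sdiff B S
      omega
    · -- c = -1 : S ∩ B = ∅, card S ≥ 2
      have hdisj : ∀ β ∈ S, β ∉ B := by
        intro β hβS hβB
        rw [hSdef] at hβS; rw [hBdef] at hβB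
        simp only [mem_filter, mem_univ, true_and] at hβS hβB
        have hβ0 : β ≠ 0 := by
          intro h; rw [h, MulChar.map_zero] at hβS; exact absurd hβS.1 (by omega)
        have hβ2 : β ^ 2 = β - 1 := by linear_combination hβB
        have hd : (β - 1) / 2 = β ^ 2 * 2⁻¹ := by
          rw [hβ2, div_eq_mul_inv]
        rw [hd, map_mul, quadraticChar_sq_one' hβ0, one_mul] at hβS
        have := hβS.2
        rw [hinv, hc1] at this
        omega
      have h1 : 1 ≤ S.card := by
        rw [hc1] at hcount
        have : (q : ℤ) ≥ 11 := by exact_mod_cast hge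
        omega
      obtain ⟨β, hβ⟩ := Finset.card_pos.mp h1
      exact ⟨β, Finset.mem_sdiff.mpr ⟨hβ, hdisj β hβ⟩⟩
  obtain ⟨β, hβ⟩ := hSB
  rw [Finset.mem_sdiff] at hβ
  obtain ⟨hβS, hβB⟩ := hβ
  rw [hSdef] at hβS
  simp only [mem_filter, mem_univ, true_and] at hβS
  obtain ⟨hχβ, hχd⟩ := hβS
  have hβ0 : β ≠ 0 := by
    intro h; rw [h, MulChar.map_zero] at hχβ; omega
  have hd0 : (β - 1) / 2 ≠ 0 := by
    intro h; rw [h, MulChar.map_zero] at hχd; omega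
  refine ⟨β, ⟨hβ0, ?_⟩, ?_, ?_, Or.inr ⟨hd0, ?_⟩⟩
  · rintro ⟨y, hy⟩
    have : IsSquare β := ⟨y, by rw [← hy]; ring⟩
    rw [← quadraticChar_one_iff_isSquare hβ0] at this
    rw [this] at hχβ; omega
  · -- β ∉ {-1, 2, 2⁻¹}
    simp only [Set.mem_insert_iff, Set.mem_singleton_iff, not_or]
    refine ⟨?_, ?_, ?_⟩
    · intro h
      rw [h] at hχd
      have : ((-1 : F) - 1) / 2 = -1 := by rw [div_eq_iff h2ne]; ring
      rw [this, hχm1] at hχd; omega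
    · intro h
      rw [h] at hχβ hχd
      have : ((2 : F) - 1) / 2 = 2⁻¹ := by ring
      rw [this, hinv] at hχd
      rw [← hcdef] at hχβ
      omega
    · intro h
      rw [h] at hχd
      have h2i : (2 : F)⁻¹ ≠ 0 := inv_ne_zero h2ne
      have : ((2 : F)⁻¹ - 1) / 2 = -1 * (2⁻¹) ^ 2 := by field_simp; ring
      rw [this, map_mul, hχm1, quadraticChar_sq_one' h2i] at hχd
      omega
  · -- β ^ 3 ≠ -1
    intro h
    have hβne : β ≠ -1 := by
      intro he; rw [he, hχm1] at hχβ
      rw [he] at hχd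
      have : ((-1 : F) - 1) / 2 = -1 := by rw [div_eq_iff h2ne]; ring
      rw [this, hχm1] at hχd; omega
    have hfac : (β + 1) * (β ^ 2 - β + 1) = 0 := by linear_combination h
    have hne : β + 1 ≠ 0 := fun hc => hβne (by linear_combination hc)
    have : β ^ 2 - β + 1 = 0 := by
      rcases mul_eq_zero.mp hfac with h' | h'
      · exact absurd h' hne
      · exact h'
    exact hβB (by rw [hBdef]; simp [this])
  · -- (β - 1) / 2 ∈ QR
    have := (quadraticChar_one_iff_isSquare hd0).mp hχd
    obtain ⟨r, hr⟩ := this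
    exact ⟨r, by rw [hr]; ring⟩
end

section
/- Let q ≡ 3 (mod 4) be an odd prime power with q ≠ 3, and let β ∈ NQR(q) with β ≠ −1. Then S_β = {{x, xβ} : x ∈ QR(q)} is a strong starter for the additive group of F; explicitly: (i) the elements x and xβ for x ∈ QR(q) are pairwise distinct and together constitute all of F \ {0}, i.e., F \ {0} is the disjoint union of QR(q) and β·QR(q); (ii) the differences x(1−β) and x(β−1) for x ∈ QR(q) are pairwise distinct and together constitute all of F \ {0}; (iii) the sums x(1+β) for x ∈ QR(q) are all nonzero, and the map x ↦ x(1+β) is injective on QR(q). -/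
section QuadraticResidues

variable {F : Type*} [Field F]

lemma mem_QR_iff {x : F} : x ∈ QR F ↔ x ≠ 0 ∧ IsSquare x := by
  simp only [QR, Set.mem_ofPred_eq, IsSquare, sq, eq_comm]

lemma mem_NQR_iff {x : F} : x ∈ NQR F ↔ x ≠ 0 ∧ ¬ IsSquare x := by
  simp only [NQR, Set.mem_ofPred_eq, IsSquare, sq, eq_comm]

variable [Fintype F]

lemma FiniteField.isSquare_mul_iff {a b : F} (ha : a ≠ 0) (hb : b ≠ 0) :
    IsSquare (a * b) ↔ (IsSquare a ↔ IsSquare b) := by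
  classical
  rw [← quadraticChar_one_iff_isSquare (mul_ne_zero ha hb),
    ← quadraticChar_one_iff_isSquare ha, ← quadraticChar_one_iff_isSquare hb, map_mul]
  rcases quadraticChar_dichotomy ha with h | h <;>
    rcases quadraticChar_dichotomy hb with h' | h' <;> rw [h, h'] <;> norm_num

lemma FiniteField.isSquare_neg_iff_not_of_card_mod_four {a : F} (ha : a ≠ 0)
    (hF : Fintype.card F % 4 = 3) : IsSquare (-a) ↔ ¬ IsSquare a := by
  have hm1 : ¬ IsSquare (-1 : F) := by simp [FiniteField.isSquare_neg_one_iff, hF]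
  rw [neg_eq_neg_one_mul, FiniteField.isSquare_mul_iff (neg_ne_zero.mpr one_ne_zero) ha]
  tauto

lemma image_mul_right_QR {c : F} (hc : c ≠ 0) :
    (· * c) '' QR F = {z : F | z ≠ 0 ∧ (IsSquare z ↔ IsSquare c)} := by
  ext z
  simp only [mem_QR_iff, Set.mem_image, Set.mem_ofPred_eq]
  constructor
  · rintro ⟨x, ⟨hx, hxs⟩, rfl⟩
    exact ⟨mul_ne_zero hx hc, by rw [FiniteField.isSquare_mul_iff hx hc]; tauto⟩
  · rintro ⟨hz, hzc⟩
    refine ⟨z * c⁻¹, ⟨mul_ne_zero hz (inv_ne_zero hc), ?_⟩, inv_mul_cancel_right₀ hc z⟩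
    rwa [FiniteField.isSquare_mul_iff hz (inv_ne_zero hc), isSquare_inv]

variable {c d : F}

lemma image_mul_right_QR_union_eq (hc : c ≠ 0) (hd : d ≠ 0)
    (hcd : IsSquare c ↔ ¬ IsSquare d) :
    (· * c) '' QR F ∪ (· * d) '' QR F = {z : F | z ≠ 0} := by
  ext z
  simp only [image_mul_right_QR hc, image_mul_right_QR hd, Set.mem_union, Set.mem_ofPred_eq]
  tauto

lemma disjoint_image_mul_right_QR (hc : c ≠ 0) (hd : d ≠ 0)
    (hcd : IsSquare c ↔ ¬ IsSquare d) :
    Disjoint ((· * c) '' QR F) ((· * d) '' QR F) := by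
  rw [image_mul_right_QR hc, image_mul_right_QR hd, Set.disjoint_left]
  rintro z ⟨_, hzc⟩ ⟨_, hzd⟩
  tauto

end QuadraticResidues

theorem starter_S_beta_is_strong_starter_general (q : ℕ) (hq : q % 4 = 3)
    (F : Type*) [Field F] [Fintype F] (hcard : Fintype.card F = q)
    (β : F) (hβ : β ∈ NQR F) (hβ1 : β ≠ -1) :
    ((QR F ∪ (fun x => x * β) '' QR F = {x : F | x ≠ 0}) ∧
      Disjoint (QR F) ((fun x => x * β) '' QR F) ∧
      Set.InjOn (fun x => x * β) (QR F)) ∧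
    (((fun x => x * (1 - β)) '' QR F ∪ (fun x => x * (β - 1)) '' QR F
        = {x : F | x ≠ 0}) ∧
      Disjoint ((fun x => x * (1 - β)) '' QR F) ((fun x => x * (β - 1)) '' QR F) ∧
      Set.InjOn (fun x => x * (1 - β)) (QR F) ∧
      Set.InjOn (fun x => x * (β - 1)) (QR F)) ∧
    ((∀ x ∈ QR F, x * (1 + β) ≠ 0) ∧
      Set.InjOn (fun x => x * (1 + β)) (QR F)) := by
  obtain ⟨hβ0, hβns⟩ := mem_NQR_iff.mp hβ
  have hone_sub_β : 1 - β ≠ 0 := fun h => hβns (sub_eq_zero.mp h ▸ IsSquare.one)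
  have hβ_sub_one : β - 1 ≠ 0 := by rwa [← neg_sub, neg_ne_zero]
  have hone_add_β : 1 + β ≠ 0 := fun h => hβ1 (eq_neg_of_add_eq_zero_right h)
  have hclass₁ : IsSquare (1 : F) ↔ ¬ IsSquare β := iff_of_true IsSquare.one hβns
  have hclass₂ : IsSquare (1 - β) ↔ ¬ IsSquare (β - 1) := by
    rw [← neg_sub, FiniteField.isSquare_neg_iff_not_of_card_mod_four hβ_sub_one (hcard ▸ hq)]
  refine ⟨⟨?_, ?_, (mul_left_injective₀ hβ0).injOn⟩,
    ⟨image_mul_right_QR_union_eq hone_sub_β hβ_sub_one hclass₂,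
      disjoint_image_mul_right_QR hone_sub_β hβ_sub_one hclass₂,
      (mul_left_injective₀ hone_sub_β).injOn, (mul_left_injective₀ hβ_sub_one).injOn⟩,
    fun x hx => mul_ne_zero (mem_QR_iff.mp hx).1 hone_add_β,
    (mul_left_injective₀ hone_add_β).injOn⟩
  · simpa using image_mul_right_QR_union_eq one_ne_zero hβ0 hclass₁
  · simpa using disjoint_image_mul_right_QR one_ne_zero hβ0 hclass₁

/-- **Theorem (Horton).** If `q ≡ 3 (mod 4)` is an odd prime power, `q ≠ 3`, and
`β ∈ NQR(q) \ {-1}`, then `S_β = {{x, xβ} : x ∈ QR(q)}` is a strong starter for the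
additive group of `F`:
(i) `F \ {0}` is the disjoint union of `QR(q)` and `β·QR(q)` (and `x ↦ xβ` is
injective on `QR(q)`);
(ii) the differences `x(1-β)` and `x(β-1)`, `x ∈ QR(q)`, are pairwise distinct and
exhaust `F \ {0}`;
(iii) the sums `x(1+β)`, `x ∈ QR(q)`, are nonzero and pairwise distinct. -/
theorem starter_S_beta_is_strong_starter (q : ℕ) (hq : q % 4 = 3) (hq3 : q ≠ 3)
    (F : Type*) [Field F] [Fintype F] (hcard : Fintype.card F = q)
    (β : F) (hβ : β ∈ NQR F) (hβ1 : β ≠ -1) :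
    ((QR F ∪ (fun x => x * β) '' QR F = {x : F | x ≠ 0}) ∧
      Disjoint (QR F) ((fun x => x * β) '' QR F) ∧
      Set.InjOn (fun x => x * β) (QR F)) ∧
    (((fun x => x * (1 - β)) '' QR F ∪ (fun x => x * (β - 1)) '' QR F
        = {x : F | x ≠ 0}) ∧
      Disjoint ((fun x => x * (1 - β)) '' QR F) ((fun x => x * (β - 1)) '' QR F) ∧
      Set.InjOn (fun x => x * (1 - β)) (QR F) ∧
      Set.InjOn (fun x => x * (β - 1)) (QR F)) ∧
    ((∀ x ∈ QR F, x * (1 + β) ≠ 0) ∧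
      Set.InjOn (fun x => x * (1 + β)) (QR F)) :=
  starter_S_beta_is_strong_starter_general q hq F hcard β hβ hβ1
end

section
/- Let q ≡ 3 (mod 4) be an odd prime power with q ≠ 3, and let β ∈ NQR(q) with β ≠ −1. Then the one-factorizations of the complete graph on F ∪ {∞} generated by the starter S_β and by the starter −S_β are orthogonal: for all γ, δ ∈ F, the one-factors F^β_γ and G^β_δ share at most one edge. -/
/-!
The only edge through `∞` in either factor is `{∞, γ}` resp. `{∞, δ}`, so it is shared exactly
when `γ = δ`. A finite edge `{x+γ, xβ+γ}` equal to `{-y+δ, -yβ+δ}` with `x, y` nonzero squares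
cannot match endpoints in order, since then `x = -y` and `-1` would be a square (`q ≡ 3 mod 4`);
matched crosswise it forces `x = y` and `x (1 + β) = δ - γ`, which determines `x` as `β ≠ -1`
and needs `γ ≠ δ`.
-/

section

variable {F : Type*} [Field F]

lemma neg_notMem_QR (hneg : ¬IsSquare (-1 : F)) {x : F} (hx : x ∈ QR F) : -x ∉ QR F := by
  obtain ⟨hx0, a, rfl⟩ := hx
  rintro ⟨-, b, hb⟩
  have ha : a ≠ 0 := by rintro rfl; simp at hx0
  exact hneg ⟨b / a, by field_simp; linear_combination -hb⟩

lemma eq_of_mk_none_mem_negStarterFactor {β γ δ : F} (h : s(none, some γ) ∈ negStarterFactor β δ) :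
    γ = δ := by
  rcases h with h | ⟨y, -, h⟩
  · simpa using h
  · simp at h

lemma mul_one_add_eq_of_starter_edge_eq_negStarter_edge (hneg : ¬IsSquare (-1 : F)) {β γ δ x y : F}
    (hβ : β ≠ 1) (hx : x ∈ QR F) (hy : y ∈ QR F)
    (h : s(x + γ, x * β + γ) = s(-y + δ, -(y * β) + δ)) : x * (1 + β) = δ - γ := by
  have hβ' : β - 1 ≠ 0 := sub_ne_zero.mpr hβ
  rcases Sym2.eq_iff.mp h with ⟨h₁, h₂⟩ | ⟨h₁, h₂⟩
  · have : x = -y := mul_right_cancel₀ hβ' (by linear_combination h₂ - h₁)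
    exact absurd (this ▸ hx) (neg_notMem_QR hneg hy)
  · have : x = y := mul_right_cancel₀ hβ' (by linear_combination h₂ - h₁)
    subst this
    linear_combination h₁

lemma starterFactor_inter_negStarterFactor_subset [DecidableEq F] (hneg : ¬IsSquare (-1 : F))
    {β : F} (hβ : β ≠ 1) (hβ' : β ≠ -1) (γ δ : F) :
    starterFactor β γ ∩ negStarterFactor β δ ⊆
      {if γ = δ then s(none, some γ)
        else s(some ((δ - γ) / (1 + β) + γ), some ((δ - γ) / (1 + β) * β + γ))} := by
  have h1β : 1 + β ≠ 0 := fun h => hβ' (by linear_combination h)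
  rintro e ⟨he | ⟨x, hx, rfl⟩, he'⟩
  · rw [Set.mem_singleton_iff] at he
    subst he
    rw [if_pos (eq_of_mk_none_mem_negStarterFactor he')]
    rfl
  · rcases he' with he' | ⟨y, hy, he'⟩
    · simp at he'
    have hxy : x * (1 + β) = δ - γ :=
      mul_one_add_eq_of_starter_edge_eq_negStarter_edge hneg hβ hx hy (by simpa using he')
    have hγδ : γ ≠ δ := fun h => hx.1 (by simpa [h, h1β] using hxy)
    rw [Set.mem_singleton_iff, if_neg hγδ, ← hxy, mul_div_cancel_right₀ x h1β]

end

theorem starter_negStarter_orthogonal_general (q : ℕ) (hq : q % 4 = 3)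
    (F : Type*) [Field F] [Fintype F] (hcard : Fintype.card F = q)
    (β : F) (hβ : β ∈ NQR F) (hβ1 : β ≠ -1) :
    ∀ γ δ : F, Set.Subsingleton (starterFactor β γ ∩ negStarterFactor β δ) := by
  have hneg : ¬IsSquare (-1 : F) := by
    rw [FiniteField.isSquare_neg_one_iff, hcard]; omega
  have hβ_ne_one : β ≠ 1 := by
    rintro rfl
    exact hβ.2 ⟨1, one_pow 2⟩
  classical
  intro γ δ
  exact Set.subsingleton_singleton.anti
    (starterFactor_inter_negStarterFactor_subset hneg hβ_ne_one hβ1 γ δ)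

/-- If `q ≡ 3 (mod 4)` is an odd prime power, `q ≠ 3`, and `β ∈ NQR(q) \ {-1}`,
then the one-factorizations generated by the starters `S_β` and `-S_β` are
orthogonal. -/
theorem starter_negStarter_orthogonal (q : ℕ) (hq : q % 4 = 3) (hq3 : q ≠ 3)
    (F : Type*) [Field F] [Fintype F] (hcard : Fintype.card F = q)
    (β : F) (hβ : β ∈ NQR F) (hβ1 : β ≠ -1) :
    ∀ γ δ : F, Set.Subsingleton (starterFactor β γ ∩ negStarterFactor β δ) :=
  starter_negStarter_orthogonal_general q hq F hcard β hβ hβ1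
end

section
/- Let n ≥ 5 be an odd integer. Consider the one-factorization of the complete graph on the vertex set (ℤ/nℤ) ∪ {∞} generated by the patterned starter, whose one-factors are P_γ = {{∞, γ}} ∪ {{x+γ, −x+γ} : x ∈ ℤ/nℤ, x ≠ 0} for γ ∈ ℤ/nℤ. This one-factorization is C4-free (that is, for all γ, δ ∈ ℤ/nℤ the graph with edge set P_γ ∪ P_δ contains no cycle of length 4) if and only if n is not divisible by 3. -/
/-- The one-factor `P_γ = {{∞, γ}} ∪ {{x+γ, -x+γ} : x ∈ ℤ/nℤ, x ≠ 0}` on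
`(ℤ/nℤ) ∪ {∞}` (with `∞ = none`), of the one-factorization generated by the
patterned starter. -/
def patternedFactor (n : ℕ) (γ : ZMod n) : Set (Sym2 (Option (ZMod n))) :=
  {s(none, some γ)} ∪
    {e | ∃ x : ZMod n, x ≠ 0 ∧ e = s(some (x + γ), some (-x + γ))}

/-!
Let `σ_γ` be the involution of `(ℤ/nℤ) ∪ {∞}` exchanging the two ends of every edge of `P_γ`.
Consecutive edges of a 4-cycle in `P_γ ∪ P_δ` lie in different factors, so the cycle is
`v, σ_γ v, σ_δ σ_γ v = σ_γ σ_δ v, σ_δ v`, and this square is carried to itself by `σ_γ` and `σ_δ`.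
Away from `∞` both maps are reflections `p ↦ 2γ - p`, `p ↦ 2δ - p`, and a square of reflections
would give `2 (σ_γ v - σ_δ v) = 0`, impossible for odd `n`. So the square passes through `∞`,
where the condition reads `2γ - δ = 2δ - γ` with `γ ≠ δ`: `γ - δ` has order 3. By Cauchy's
theorem `ℤ/nℤ` has an element of order 3 exactly when `3 ∣ n`.
-/

open Function SimpleGraph

section

variable {V : Type*}

theorem hasC4_iff_exists_square {G : SimpleGraph V} :
    HasC4 G ↔ ∃ v a b d, G.Adj v a ∧ G.Adj a b ∧ G.Adj b d ∧ G.Adj d v ∧ v ≠ b ∧ a ≠ d := by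
  constructor
  · rintro ⟨v, c, hc, hl⟩
    match c, hc, hl with
    | .cons h₁ (.cons h₂ (.cons h₃ (.cons h₄ .nil))), hc, _ =>
      have hnd := hc.support_nodup
      simp only [Walk.support_cons, Walk.support_nil, List.tail_cons, List.nodup_cons,
        List.mem_cons, List.not_mem_nil] at hnd
      exact ⟨_, _, _, _, h₁, h₂, h₃, h₄, by tauto, by tauto⟩
  · rintro ⟨v, a, b, d, h₁, h₂, h₃, h₄, hvb, had⟩
    refine ⟨v, .cons h₁ (.cons h₂ (.cons h₃ (.cons h₄ .nil))), ?_, rfl⟩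
    simp [Walk.cons_isCycle_iff, Walk.cons_isPath_iff, h₁.ne, h₂.ne, h₃.ne, h₄.ne, h₁.ne',
      h₄.ne', hvb, hvb.symm, had]

/-- `v, s v, t (s v) = s (t v), t v` are four distinct points, the corners of a square whose
sides are alternately `s`-edges and `t`-edges. -/
def IsAlternatingSquare (s t : V → V) (v : V) : Prop :=
  v ≠ s v ∧ v ≠ t v ∧ s v ≠ t v ∧ s (t v) = t (s v)

namespace IsAlternatingSquare

variable {s t : V → V} {v : V}

theorem symm (h : IsAlternatingSquare s t v) : IsAlternatingSquare t s v :=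
  ⟨h.2.1, h.1, h.2.2.1.symm, h.2.2.2.symm⟩

theorem apply_left (hs : Involutive s) (h : IsAlternatingSquare s t v) :
    IsAlternatingSquare s t (s v) := by
  obtain ⟨hvs, hvt, hst, hcomm⟩ := h
  refine ⟨fun h => hvs (by rw [hs] at h; exact h.symm), ?_, ?_, ?_⟩
  · rw [← hcomm]; exact fun h => hvt (hs.injective h)
  · rw [hs, ← hcomm]; exact fun h => hst ((congrArg s h).trans (hs _))
  · rw [hs, ← hcomm, hs]

theorem apply_right (ht : Involutive t) (h : IsAlternatingSquare s t v) :
    IsAlternatingSquare s t (t v) :=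
  (h.symm.apply_left ht).symm

theorem of_square (hs : Involutive s) (ht : Involutive t) {a b d : V} (ha : a = s v)
    (hb : b = s a ∨ b = t a) (hd : d = s b ∨ d = t b) (hv : v = s d ∨ v = t d)
    (hva : v ≠ a) (hvd : v ≠ d) (hvb : v ≠ b) (had : a ≠ d) : IsAlternatingSquare s t v := by
  subst ha
  have hb' : b = t (s v) := hb.resolve_left fun h => hvb (by rw [h, hs])
  have hd' : d = s b := hd.resolve_right fun h => had (by rw [h, hb', ht])
  have hdv : d = t v := by
    rcases hv with h | h
    · exact absurd (by rw [h, hd', hs]) hvb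
    · rw [h, ht]
  refine ⟨hva, hdv ▸ hvd, hdv ▸ had, ?_⟩
  rw [← hdv, hd', hs, hb']

end IsAlternatingSquare

open IsAlternatingSquare in
theorem hasC4_iff_exists_isAlternatingSquare {G : SimpleGraph V} {s t : V → V}
    (hs : Involutive s) (ht : Involutive t)
    (hG : ∀ u w, G.Adj u w ↔ u ≠ w ∧ (w = s u ∨ w = t u)) :
    HasC4 G ↔ ∃ v, IsAlternatingSquare s t v := by
  rw [hasC4_iff_exists_square]
  constructor
  · rintro ⟨v, a, b, d, hva, hab, hbd, hdv, hvb, had⟩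
    rw [hG] at hva hab hbd hdv
    rcases hva.2 with ha | ha
    · exact ⟨v, of_square hs ht ha hab.2 hbd.2 hdv.2 hva.1 hdv.1.symm hvb had⟩
    · exact ⟨v, (of_square ht hs ha hab.2.symm hbd.2.symm hdv.2.symm hva.1 hdv.1.symm hvb
        had).symm⟩
  · rintro ⟨v, hvs, hvt, hst, hcomm⟩
    simp only [hG]
    refine ⟨v, s v, t (s v), t v, ⟨hvs, .inl rfl⟩, ⟨fun h => hvt ?_, .inr rfl⟩,
      ⟨fun h => hvs (ht.injective h).symm, .inl (by rw [← hcomm, hs])⟩,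
      ⟨hvt.symm, .inr (ht v).symm⟩, fun h => hst ((congrArg t h).trans (ht _)).symm, hst⟩
    rw [← hcomm] at h
    exact hs.injective h

end

theorem exists_addOrderOf_eq_prime_iff {G : Type*} [AddGroup G] [Fintype G] {p : ℕ}
    [Fact p.Prime] : (∃ x : G, addOrderOf x = p) ↔ p ∣ Fintype.card G :=
  ⟨fun ⟨_, hx⟩ => hx ▸ addOrderOf_dvd_card, exists_prime_addOrderOf_dvd_card p⟩

theorem ZMod.isUnit_two_of_odd {n : ℕ} (hodd : Odd n) : IsUnit (2 : ZMod n) := by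
  simpa using (ZMod.isUnit_iff_coprime 2 n).2 (Nat.coprime_two_left.2 hodd)

/-- The partner of a vertex in the one-factor `P_γ`. -/
def patternedPartner (n : ℕ) (γ : ZMod n) : Option (ZMod n) → Option (ZMod n)
  | none => some γ
  | some p => if p = γ then none else some (2 * γ - p)

section

variable {n : ℕ} {γ δ : ZMod n}

theorem patternedPartner_involutive : Involutive (patternedPartner n γ) := by
  rintro (_ | p)
  · simp [patternedPartner]
  · by_cases hp : p = γ
    · simp [patternedPartner, hp]
    · have : 2 * γ - p ≠ γ := fun h => hp (by linear_combination -h)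
      simp [patternedPartner, hp, this]

theorem add_eq_of_patternedPartner_eq_some {p q : ZMod n}
    (h : patternedPartner n γ (some p) = some q) : p + q = 2 * γ := by
  by_cases hp : p = γ <;> simp only [patternedPartner, hp, if_true, if_false] at h
  · cases h
  · cases h; ring

theorem mk_mem_patternedFactor_iff {u w : Option (ZMod n)} (huw : u ≠ w) :
    s(u, w) ∈ patternedFactor n γ ↔ w = patternedPartner n γ u := by
  rcases u with _ | p <;> rcases w with _ | q
  · exact absurd rfl huw
  · simp [patternedFactor, patternedPartner]
  · simp [patternedFactor, patternedPartner, eq_comm]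
  · simp only [patternedFactor, ne_eq, Set.singleton_union, Set.mem_insert_iff, Sym2.eq,
      Sym2.rel_iff', Prod.mk.injEq, reduceCtorEq, Option.some.injEq, false_and,
      Prod.swap_prod_mk, and_false, or_self, Set.mem_ofPred_eq, false_or, patternedPartner,
      Option.some_eq_ite_none_left]
    constructor
    · rintro ⟨x, hx, ⟨rfl, rfl⟩ | ⟨rfl, rfl⟩⟩
      · exact ⟨fun h => hx (by linear_combination h), by ring⟩
      · exact ⟨fun h => hx (by linear_combination -h), by ring⟩
    · rintro ⟨hp, rfl⟩
      exact ⟨p - γ, sub_ne_zero.2 hp, .inl ⟨by ring, by ring⟩⟩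

theorem adj_fromEdgeSet_patternedFactor_union_iff {u w : Option (ZMod n)} :
    (fromEdgeSet (patternedFactor n γ ∪ patternedFactor n δ)).Adj u w ↔
      u ≠ w ∧ (w = patternedPartner n γ u ∨ w = patternedPartner n δ u) := by
  rw [fromEdgeSet_adj, Set.mem_union, and_comm]
  exact and_congr_right fun huw =>
    or_congr (mk_mem_patternedFactor_iff huw) (mk_mem_patternedFactor_iff huw)

theorem isAlternatingSquare_patternedPartner_none_iff :
    IsAlternatingSquare (patternedPartner n γ) (patternedPartner n δ) none ↔
      addOrderOf (γ - δ) = 3 := by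
  rw [addOrderOf_eq_prime_iff, sub_ne_zero]
  by_cases h : γ = δ
  · simp [h, IsAlternatingSquare]
  · simp only [IsAlternatingSquare, patternedPartner, ne_eq, reduceCtorEq, not_false_eq_true,
      Option.some.injEq, h, Ne.symm h, ↓reduceIte, true_and, nsmul_eq_mul, Nat.cast_ofNat,
      and_true]
    constructor <;> intro h' <;> linear_combination h'

theorem none_mem_of_isAlternatingSquare_patternedPartner (hodd : Odd n) {v : Option (ZMod n)}
    (h : IsAlternatingSquare (patternedPartner n γ) (patternedPartner n δ) v) :
    v = none ∨ patternedPartner n γ v = none ∨ patternedPartner n δ v = none ∨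
      patternedPartner n γ (patternedPartner n δ v) = none := by
  obtain ⟨-, -, hne, hcomm⟩ := h
  by_contra! hfin
  obtain ⟨p, rfl⟩ := Option.ne_none_iff_exists'.1 hfin.1
  obtain ⟨a, ha⟩ := Option.ne_none_iff_exists'.1 hfin.2.1
  obtain ⟨d, hd⟩ := Option.ne_none_iff_exists'.1 hfin.2.2.1
  obtain ⟨b, hdb⟩ := Option.ne_none_iff_exists'.1 hfin.2.2.2
  have hab : patternedPartner n δ (some a) = some b := by rw [← ha, ← hcomm, hdb]
  rw [hd] at hdb
  have e₁ := add_eq_of_patternedPartner_eq_some ha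
  have e₂ := add_eq_of_patternedPartner_eq_some hd
  have e₃ := add_eq_of_patternedPartner_eq_some hdb
  have e₄ := add_eq_of_patternedPartner_eq_some hab
  have had : a = d := (ZMod.isUnit_two_of_odd hodd).mul_left_cancel
    (by linear_combination e₁ - e₂ + e₄ - e₃)
  exact hne (by rw [ha, hd, had])

theorem exists_isAlternatingSquare_patternedPartner_iff (hodd : Odd n) :
    (∃ v, IsAlternatingSquare (patternedPartner n γ) (patternedPartner n δ) v) ↔
      IsAlternatingSquare (patternedPartner n γ) (patternedPartner n δ) none := by
  refine ⟨fun ⟨v, hv⟩ => ?_, fun h => ⟨none, h⟩⟩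
  have hs := patternedPartner_involutive (n := n) (γ := γ)
  have ht := patternedPartner_involutive (n := n) (γ := δ)
  rcases none_mem_of_isAlternatingSquare_patternedPartner hodd hv with h | h | h | h
  · exact h ▸ hv
  · exact h ▸ hv.apply_left hs
  · exact h ▸ hv.apply_right ht
  · exact h ▸ (hv.apply_right ht).apply_left hs

theorem hasC4_fromEdgeSet_patternedFactor_union_iff (hodd : Odd n) :
    HasC4 (fromEdgeSet (patternedFactor n γ ∪ patternedFactor n δ)) ↔
      addOrderOf (γ - δ) = 3 := by
  rw [hasC4_iff_exists_isAlternatingSquare patternedPartner_involutive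
    patternedPartner_involutive fun _ _ => adj_fromEdgeSet_patternedFactor_union_iff,
    exists_isAlternatingSquare_patternedPartner_iff hodd,
    isAlternatingSquare_patternedPartner_none_iff]

end

/-- For odd `n ≥ 5`, the one-factorization of `K_{n+1}` generated by the patterned
starter is C4-free if and only if `n` is not divisible by 3. -/
theorem patterned_starter_C4_free_iff (n : ℕ) (hn : 5 ≤ n) (hodd : Odd n) :
    (∀ γ δ : ZMod n,
      ¬ HasC4 (SimpleGraph.fromEdgeSet (patternedFactor n γ ∪ patternedFactor n δ)))
      ↔ ¬ (3 ∣ n) := by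
  have : NeZero n := ⟨by omega⟩
  have hcauchy := exists_addOrderOf_eq_prime_iff (G := ZMod n) (p := 3)
  rw [ZMod.card] at hcauchy
  simp only [hasC4_fromEdgeSet_patternedFactor_union_iff hodd]
  rw [← hcauchy, not_exists]
  exact ⟨fun h x => by simpa using h x 0, fun h γ δ => h (γ - δ)⟩
end
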